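/- arXiv:2206.09226 — 3 statements merged into one kernel-verified Lean document; each statement's English description precedes it below -/
import Mathlib

section
/- Let n ≥ 1 and k ≥ 1. Then the number N of orbits of the set of k-colored perfect matchings on ℤ/2nℤ under the rotation action of ℤ/2nℤ satisfies 2n·N = Σ_{d | 2n, d odd} φ(d)·ma(2n/d, n/d)·d^{n/d}·k^{n/d} + Σ_{d | 2n, d even} φ(d)·Σ_{j=0}^{⌊n/d'⌋} ma(2n/d, j)·d^j·k^{2n/d − j}, where the sums are over positive divisors d of 2n and in the second sum j ranges from 0 to ⌊(2n/d)/2⌋. -/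
/-- `ma m j` is the number of `j`-matchings of an `m`-element set. -/
def ma (m j : ℕ) : ℕ := m.factorial / ((m - 2 * j).factorial * 2 ^ j * j.factorial)

/-- A `k`-colored perfect matching on `ℤ/2nℤ`: a fixed-point-free involution `f`
together with a coloring `c` constant on the pairs of `f`. -/
def ColMatch (n k : ℕ) : Type :=
  {fc : (ZMod (2 * n) → ZMod (2 * n)) × (ZMod (2 * n) → Fin k) //
    (∀ x, fc.1 (fc.1 x) = x) ∧ (∀ x, fc.1 x ≠ x) ∧ (∀ x, fc.2 (fc.1 x) = fc.2 x)}

namespace Stmt17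
open Nat Finset

open Nat Finset

lemma two_mul_fact (j : ℕ) : (2*j)! = 2^j * j ! * (2*j-1)‼ := by
  cases j with
  | zero => decide
  | succ j =>
    have h1 : 2*(j+1) = (2*j+1)+1 := by ring
    rw [h1, Nat.factorial_eq_mul_doubleFactorial]
    have h2 : (2*j+1+1) = 2*(j+1) := by ring
    rw [h2, Nat.doubleFactorial_two_mul]
    have h3 : 2*(j+1)-1 = 2*j+1 := by omega
    rw [h3]

lemma ma_eq {m j : ℕ} (h : 2*j ≤ m) : ma m j = m.choose (2*j) * (2*j-1)‼ := by
  have h1 : m.choose (2*j) * (2*j)! * (m - 2*j)! = m ! :=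
    Nat.choose_mul_factorial_mul_factorial h
  have h2 : m ! = ((m - 2*j)! * 2^j * j !) * (m.choose (2*j) * (2*j-1)‼) := by
    rw [← h1, two_mul_fact]; ring
  have hpos : 0 < (m - 2*j)! * 2^j * j ! := by positivity
  rw [ma, h2, Nat.mul_div_cancel_left _ hpos]

/-- The generic term. -/
def T (d e k m j : ℕ) : ℕ := m.choose (2*j) * (2*j-1)‼ * d^j * e^(m-2*j) * k^(m-j)

/-- The generic count. -/
def cc (d e k m : ℕ) : ℕ := ∑ j ∈ Finset.range (m+1), T d e k m j

lemma T_eq_zero {d e k m j : ℕ} (h : m < 2*j) : T d e k m j = 0 := by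
  simp [T, Nat.choose_eq_zero_of_lt h]

lemma T_rec0 (d e k m : ℕ) : T d e k (m+1) 0 = e * k * T d e k m 0 := by
  simp only [T, Nat.mul_zero, Nat.choose_zero_right, Nat.sub_zero]
  rw [pow_succ, pow_succ]; ring

lemma T_rec (d e k m j : ℕ) :
    T d e k (m+2) (j+1) = e * k * T d e k (m+1) (j+1) + (m+1) * (d * k) * T d e k m j := by
  by_cases h1 : 2*j+1 ≤ m
  · obtain ⟨t, rfl⟩ := Nat.exists_eq_add_of_le h1
    have e1 : 2*j+1+t+2 - 2*(j+1) = t+1 := by omega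
    have e2 : 2*j+1+t+1 - 2*(j+1) = t := by omega
    have e3 : 2*j+1+t - 2*j = t+1 := by omega
    have e4 : 2*j+1+t+2 - (j+1) = j+t+2 := by omega
    have e5 : 2*j+1+t+1 - (j+1) = j+t+1 := by omega
    have e6 : 2*j+1+t - j = j+t+1 := by omega
    have hp : (2*j+1+t+2).choose (2*(j+1)) =
        (2*j+1+t+1).choose (2*j+1) + (2*j+1+t+1).choose (2*(j+1)) := by
      have : 2*(j+1) = (2*j+1)+1 := by ring
      rw [this]
      exact Nat.choose_succ_succ _ _
    have hs : (2*j+1+t+1) * ((2*j+1+t).choose (2*j)) =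
        (2*j+1+t+1).choose (2*j+1) * (2*j+1) := by
      have := Nat.add_one_mul_choose_eq (2*j+1+t) (2*j)
      simpa using this
    have hdf : (2*(j+1)-1)‼ = (2*j+1) * (2*j-1)‼ := by
      have h3 : 2*(j+1)-1 = 2*j+1 := by omega
      rw [h3]
      have := Nat.doubleFactorial_add_one (2*j)
      simpa using this
    simp only [T, e1, e2, e3, e4, e5, e6, hp, hdf]
    rw [Nat.add_mul]
    zify at hs ⊢
    linear_combination (-((2*j-1)‼ * d^(j+1) * e^(t+1) * k^(j+t+2)) : ℤ) * hs
  · by_cases h2 : m = 2*j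
    · subst h2
      have c1 : (2*j+2).choose (2*(j+1)) = 1 := by
        have : 2*j+2 = 2*(j+1) := by ring
        rw [this, Nat.choose_self]
      have c2 : (2*j+1).choose (2*(j+1)) = 0 := Nat.choose_eq_zero_of_lt (by omega)
      have c3 : (2*j).choose (2*j) = 1 := Nat.choose_self _
      have hdf : (2*(j+1)-1)‼ = (2*j+1) * (2*j-1)‼ := by
        have h3 : 2*(j+1)-1 = 2*j+1 := by omega
        rw [h3]
        have := Nat.doubleFactorial_add_one (2*j)
        simpa using this
      have e1 : 2*j+2 - 2*(j+1) = 0 := by omega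
      have e2 : 2*j - 2*j = 0 := by omega
      have e4 : 2*j+2 - (j+1) = j+1 := by omega
      have e6 : 2*j - j = j := by omega
      simp only [T, c1, c2, c3, hdf, e1, e2, e4, e6]
      ring
    · have l1 : m+2 < 2*(j+1) := by omega
      have l2 : m+1 < 2*(j+1) := by omega
      have l3 : m < 2*j := by omega
      simp [T, Nat.choose_eq_zero_of_lt, l1, l2, l3]

lemma cc_zero (d e k : ℕ) : cc d e k 0 = 1 := by simp [cc, T]

lemma cc_one (d e k : ℕ) : cc d e k 1 = e * k := by
  rw [cc]
  rw [Finset.sum_range_succ, Finset.sum_range_succ, Finset.sum_range_zero]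
  have : T d e k 1 1 = 0 := T_eq_zero (by omega)
  rw [this]
  simp [T]

lemma cc_rec (d e k m : ℕ) :
    cc d e k (m+2) = e * k * cc d e k (m+1) + (m+1) * (d * k) * cc d e k m := by
  have h1 : cc d e k (m+2) = ∑ j ∈ range (m+2), T d e k (m+2) (j+1) + T d e k (m+2) 0 := by
    rw [cc]; exact Finset.sum_range_succ' _ _
  rw [h1]
  have h2 : ∀ j ∈ range (m+2), T d e k (m+2) (j+1) =
      e * k * T d e k (m+1) (j+1) + (m+1) * (d * k) * T d e k m j :=
    fun j _ => T_rec d e k m j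
  rw [Finset.sum_congr rfl h2, Finset.sum_add_distrib, ← Finset.mul_sum, ← Finset.mul_sum,
    T_rec0]
  have h3 : cc d e k (m+1) = ∑ j ∈ range (m+2), T d e k (m+1) (j+1) + T d e k (m+1) 0 := by
    rw [cc, Finset.sum_range_succ' _ (m+1)]
    congr 1
    rw [Finset.sum_range_succ (fun j => T d e k (m+1) (j+1)) (m+1),
      T_eq_zero (show m+1 < 2*(m+1+1) by omega), add_zero]
  have h4 : ∑ j ∈ range (m+2), T d e k m j = cc d e k m := by
    rw [Finset.sum_range_succ, T_eq_zero (show m < 2*(m+1) by omega), add_zero]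
    rfl
  rw [h3, h4]
  ring


open Nat Finset


lemma cc_succ (d e k m : ℕ) :
    cc d e k (m+1) = e * k * cc d e k m + m * (d * k) * cc d e k (m-1) := by
  cases m with
  | zero => simp [cc_one, cc_zero]
  | succ m' => simpa using cc_rec d e k m'

structure Str (β γ α : Type) [AddGroup β] where
  ι : α → α
  σ : α → β
  col : α → γ
  invol : ∀ a, ι (ι a) = a
  sig : ∀ a, σ (ι a) = - σ a
  fixne : ∀ a, ι a = a → σ a ≠ 0
  coleq : ∀ a, col (ι a) = col a

variable {β γ α : Type} [AddGroup β]

lemma Str.ext' {s t : Str β γ α} (h1 : s.ι = t.ι) (h2 : s.σ = t.σ) (h3 : s.col = t.col) :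
    s = t := by
  cases s; cases t; simp_all

instance [Finite α] [Finite β] [Finite γ] : Finite (Str β γ α) := by
  apply Finite.of_injective (fun s : Str β γ α => (s.ι, s.σ, s.col))
  intro s t h
  simp only [Prod.mk.injEq] at h
  exact Str.ext' h.1 h.2.1 h.2.2

section Fibers

variable [DecidableEq α]

def resA (a₀ : α) (s : Str β γ α) (h : s.ι a₀ = a₀) : Str β γ {a : α // a ≠ a₀} where
  ι a := ⟨s.ι a.1, fun hc => a.2 (by rw [← s.invol a.1, hc, h])⟩
  σ a := s.σ a.1
  col a := s.col a.1
  invol a := Subtype.ext (s.invol a.1)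
  sig a := s.sig a.1
  fixne a ha := s.fixne a.1 (congrArg Subtype.val ha)
  coleq a := s.coleq a.1

def buildA (a₀ : α) (x : {x : β // x + x = 0 ∧ x ≠ 0}) (z : γ)
    (t : Str β γ {a : α // a ≠ a₀}) : Str β γ α where
  ι a := if h : a = a₀ then a₀ else (t.ι ⟨a, h⟩).1
  σ a := if h : a = a₀ then x.1 else t.σ ⟨a, h⟩
  col a := if h : a = a₀ then z else t.col ⟨a, h⟩
  invol a := by
    by_cases h : a = a₀
    · subst h; rw [dif_pos rfl, dif_pos rfl]
    · rw [dif_neg h, dif_neg (t.ι ⟨a, h⟩).2]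
      exact congrArg Subtype.val (t.invol ⟨a, h⟩)
  sig a := by
    by_cases h : a = a₀
    · subst h
      rw [dif_pos rfl, dif_pos rfl]
      exact add_eq_zero_iff_eq_neg.mp x.2.1
    · rw [dif_neg h, dif_neg (t.ι ⟨a, h⟩).2, dif_neg h]
      exact t.sig ⟨a, h⟩
  fixne a ha := by
    by_cases h : a = a₀
    · subst h; rw [dif_pos rfl]; exact x.2.2
    · rw [dif_neg h] at ha ⊢
      exact t.fixne ⟨a, h⟩ (Subtype.ext ha)
  coleq a := by
    by_cases h : a = a₀
    · subst h; rw [dif_pos rfl, dif_pos rfl]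
    · rw [dif_neg h, dif_neg (t.ι ⟨a, h⟩).2, dif_neg h]
      exact t.coleq ⟨a, h⟩

noncomputable def fiberA (a₀ : α) :
    {s : Str β γ α // s.ι a₀ = a₀} ≃
      ({x : β // x + x = 0 ∧ x ≠ 0} × γ × Str β γ {a : α // a ≠ a₀}) where
  toFun p :=
    (⟨p.1.σ a₀, by
        have hs := p.1.sig a₀
        rw [p.2] at hs
        exact add_eq_zero_iff_eq_neg.mpr hs, p.1.fixne a₀ p.2⟩,
      p.1.col a₀, resA a₀ p.1 p.2)
  invFun q := ⟨buildA a₀ q.1 q.2.1 q.2.2, dif_pos rfl⟩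
  left_inv p := by
    apply Subtype.ext
    apply Str.ext' <;> funext a
    · show (if h : a = a₀ then a₀ else _) = p.1.ι a
      by_cases h : a = a₀
      · rw [dif_pos h, h, p.2]
      · rw [dif_neg h]; try rfl
    · show (if h : a = a₀ then _ else _) = p.1.σ a
      by_cases h : a = a₀
      · rw [dif_pos h, h]; try rfl
      · rw [dif_neg h]; try rfl
    · show (if h : a = a₀ then _ else _) = p.1.col a
      by_cases h : a = a₀
      · rw [dif_pos h, h]; try rfl
      · rw [dif_neg h]; try rfl
  right_inv q := by
    obtain ⟨x, z, t⟩ := q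
    refine Prod.ext (Subtype.ext ?_) (Prod.ext ?_ ?_)
    · show (if _ : a₀ = a₀ then x.1 else _) = x.1
      rw [dif_pos rfl]
    · show (if _ : a₀ = a₀ then z else _) = z
      rw [dif_pos rfl]
    · apply Str.ext' <;> funext a
      · apply Subtype.ext
        show (if h : a.1 = a₀ then a₀ else ((t.ι ⟨a.1, h⟩).1)) = (t.ι a).1
        rw [dif_neg a.2]
      · show (if h : a.1 = a₀ then x.1 else t.σ ⟨a.1, h⟩) = t.σ a
        rw [dif_neg a.2]
      · show (if h : a.1 = a₀ then z else t.col ⟨a.1, h⟩) = t.col a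
        rw [dif_neg a.2]

def resB (a₀ : α) {b : α} (s : Str β γ α) (hs : s.ι a₀ = b) :
    Str β γ {a : α // a ≠ a₀ ∧ a ≠ b} where
  ι a := ⟨s.ι a.1,
    fun hc => a.2.2 (by rw [← s.invol a.1, hc, hs]),
    fun hc => a.2.1 (by rw [← s.invol a.1, hc, ← hs, s.invol])⟩
  σ a := s.σ a.1
  col a := s.col a.1
  invol a := Subtype.ext (s.invol a.1)
  sig a := s.sig a.1
  fixne a ha := s.fixne a.1 (congrArg Subtype.val ha)
  coleq a := s.coleq a.1

def buildB (a₀ : α) {b : α} (hb : b ≠ a₀) (y : β) (z : γ)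
    (t : Str β γ {a : α // a ≠ a₀ ∧ a ≠ b}) : Str β γ α where
  ι a := if h1 : a = a₀ then b else if h2 : a = b then a₀ else (t.ι ⟨a, h1, h2⟩).1
  σ a := if h1 : a = a₀ then y else if h2 : a = b then -y else t.σ ⟨a, h1, h2⟩
  col a := if h1 : a = a₀ then z else if h2 : a = b then z else t.col ⟨a, h1, h2⟩
  invol a := by
    by_cases h1 : a = a₀
    · subst h1; rw [dif_pos rfl, dif_neg hb, dif_pos rfl]
    · rw [dif_neg h1]
      by_cases h2 : a = b
      · subst h2; rw [dif_pos rfl, dif_pos rfl]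
      · rw [dif_neg h2, dif_neg (t.ι ⟨a, h1, h2⟩).2.1, dif_neg (t.ι ⟨a, h1, h2⟩).2.2]
        exact congrArg Subtype.val (t.invol ⟨a, h1, h2⟩)
  sig a := by
    by_cases h1 : a = a₀
    · subst h1; rw [dif_pos rfl, dif_neg hb, dif_pos rfl, dif_pos rfl]
    · rw [dif_neg h1]
      by_cases h2 : a = b
      · subst h2
        rw [dif_pos rfl, dif_pos rfl, dif_neg h1, dif_pos rfl, neg_neg]
      · rw [dif_neg h2, dif_neg (t.ι ⟨a, h1, h2⟩).2.1, dif_neg (t.ι ⟨a, h1, h2⟩).2.2,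
          dif_neg h1, dif_neg h2]
        exact t.sig ⟨a, h1, h2⟩
  fixne a ha := by
    by_cases h1 : a = a₀
    · subst h1; rw [dif_pos rfl] at ha; exact absurd ha hb
    · rw [dif_neg h1] at ha
      by_cases h2 : a = b
      · subst h2; rw [dif_pos rfl] at ha; exact absurd ha.symm h1
      · rw [dif_neg h2] at ha
        rw [dif_neg h1, dif_neg h2]
        exact t.fixne ⟨a, h1, h2⟩ (Subtype.ext ha)
  coleq a := by
    by_cases h1 : a = a₀
    · subst h1; rw [dif_pos rfl, dif_neg hb, dif_pos rfl, dif_pos rfl]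
    · rw [dif_neg h1]
      by_cases h2 : a = b
      · subst h2; rw [dif_pos rfl, dif_pos rfl, dif_neg h1, dif_pos rfl]
      · rw [dif_neg h2, dif_neg (t.ι ⟨a, h1, h2⟩).2.1, dif_neg (t.ι ⟨a, h1, h2⟩).2.2,
          dif_neg h1, dif_neg h2]
        exact t.coleq ⟨a, h1, h2⟩

noncomputable def fiberB (a₀ : α) {b : α} (hb : b ≠ a₀) :
    {s : Str β γ α // s.ι a₀ = b} ≃ (β × γ × Str β γ {a : α // a ≠ a₀ ∧ a ≠ b}) where
  toFun p := (p.1.σ a₀, p.1.col a₀, resB a₀ p.1 p.2)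
  invFun q := ⟨buildB a₀ hb q.1 q.2.1 q.2.2, dif_pos rfl⟩
  left_inv p := by
    apply Subtype.ext
    have hba : p.1.ι b = a₀ := by
      have h := p.1.invol a₀; rw [p.2] at h; exact h
    have hsb : p.1.σ b = - p.1.σ a₀ := by
      have h := p.1.sig a₀; rw [p.2] at h; exact h
    have hcb : p.1.col b = p.1.col a₀ := by
      have h := p.1.coleq a₀; rw [p.2] at h; exact h
    apply Str.ext' <;> funext a
    · show (if h1 : a = a₀ then b else if h2 : a = b then a₀ else _) = p.1.ι a
      by_cases h1 : a = a₀
      · rw [dif_pos h1, h1, p.2]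
      · rw [dif_neg h1]
        by_cases h2 : a = b
        · rw [dif_pos h2, h2, hba]
        · rw [dif_neg h2]; try rfl
    · show (if h1 : a = a₀ then p.1.σ a₀ else if h2 : a = b then -(p.1.σ a₀) else _) = p.1.σ a
      by_cases h1 : a = a₀
      · rw [dif_pos h1, h1]
      · rw [dif_neg h1]
        by_cases h2 : a = b
        · rw [dif_pos h2, h2, hsb]
        · rw [dif_neg h2]; try rfl
    · show (if h1 : a = a₀ then p.1.col a₀ else if h2 : a = b then p.1.col a₀ else _) = p.1.col a
      by_cases h1 : a = a₀
      · rw [dif_pos h1, h1]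
      · rw [dif_neg h1]
        by_cases h2 : a = b
        · rw [dif_pos h2, h2, hcb]
        · rw [dif_neg h2]; try rfl
  right_inv q := by
    obtain ⟨y, z, t⟩ := q
    refine Prod.ext ?_ (Prod.ext ?_ ?_)
    · show (if _ : a₀ = a₀ then y else _) = y
      rw [dif_pos rfl]
    · show (if _ : a₀ = a₀ then z else _) = z
      rw [dif_pos rfl]
    · apply Str.ext' <;> funext a
      · apply Subtype.ext
        show (if h1 : a.1 = a₀ then b else if h2 : a.1 = b then a₀ else ((t.ι ⟨a.1, h1, h2⟩).1))
            = (t.ι a).1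
        rw [dif_neg a.2.1, dif_neg a.2.2]
      · show (if h1 : a.1 = a₀ then y else if h2 : a.1 = b then -y else t.σ ⟨a.1, h1, h2⟩) = t.σ a
        rw [dif_neg a.2.1, dif_neg a.2.2]
      · show (if h1 : a.1 = a₀ then z else if h2 : a.1 = b then z else t.col ⟨a.1, h1, h2⟩)
            = t.col a
        rw [dif_neg a.2.1, dif_neg a.2.2]

end Fibers

lemma nat_card_sigma {ι : Type} [Fintype ι] (F : ι → Type) [∀ i, Finite (F i)] :
    Nat.card (Σ i, F i) = ∑ i, Nat.card (F i) := by
  letI := fun i => Fintype.ofFinite (F i)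
  simp [Nat.card_eq_fintype_card, Fintype.card_sigma]

lemma card_pair_compl [Fintype α] [DecidableEq α] {a₀ b : α} (hb : b ≠ a₀) :
    Fintype.card {a : α // a ≠ a₀ ∧ a ≠ b} = Fintype.card α - 2 := by
  rw [Fintype.card_subtype]
  have h1 : ({a ∈ univ | a ≠ a₀ ∧ a ≠ b} : Finset α) = univ \ {a₀, b} := by
    ext a; simp [not_or]
  rw [h1, card_sdiff_of_subset (subset_univ _), Finset.card_univ]
  congr 1
  rw [card_insert_of_notMem (by simp [Ne.symm hb]), card_singleton]

lemma card_ne_subtype [Fintype α] [DecidableEq α] (a₀ : α) :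
    Fintype.card {a : α // a ≠ a₀} = Fintype.card α - 1 := by
  rw [Fintype.card_subtype]
  have h1 : ({a ∈ univ | a ≠ a₀} : Finset α) = univ \ {a₀} := by ext a; simp
  rw [h1, card_sdiff_of_subset (subset_univ _), Finset.card_univ, card_singleton]

theorem card_Str (β γ : Type) [AddGroup β] [Finite β] [Finite γ] (m : ℕ) :
    ∀ (α : Type) [Fintype α] [DecidableEq α], Fintype.card α = m →
      Nat.card (Str β γ α) =
        cc (Nat.card β) (Nat.card {x : β // x + x = 0 ∧ x ≠ 0}) (Nat.card γ) m := by
  induction m using Nat.strong_induction_on with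
  | _ m IH =>
    intro α _ _ hα
    cases m with
    | zero =>
      haveI : IsEmpty α := Fintype.card_eq_zero_iff.mp hα
      rw [cc_zero]
      rw [Nat.card_eq_one_iff_unique]
      constructor
      · constructor
        intro s t
        apply Str.ext' <;> funext a <;> exact isEmptyElim a
      · exact ⟨⟨fun a => isEmptyElim a, fun a => isEmptyElim a, fun a => isEmptyElim a,
          fun a => isEmptyElim a, fun a => isEmptyElim a, fun a => isEmptyElim a,
          fun a => isEmptyElim a⟩⟩
    | succ m =>
      obtain ⟨a₀⟩ : Nonempty α := Fintype.card_pos_iff.mp (by omega)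
      set d := Nat.card β with hd
      set e := Nat.card {x : β // x + x = 0 ∧ x ≠ 0} with he
      set k := Nat.card γ with hk
      have key : Nat.card (Str β γ α) =
          ∑ b : α, Nat.card {s : Str β γ α // s.ι a₀ = b} := by
        rw [Nat.card_congr (Equiv.sigmaFiberEquiv (fun s : Str β γ α => s.ι a₀)).symm]
        exact nat_card_sigma _
      have hA : Nat.card {s : Str β γ α // s.ι a₀ = a₀} = e * (k * cc d e k m) := by
        rw [Nat.card_congr (fiberA a₀), Nat.card_prod, Nat.card_prod]
        congr 2
        exact IH m (by omega) _ (by rw [card_ne_subtype, hα]; omega)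
      have hB : ∀ b : α, b ≠ a₀ →
          Nat.card {s : Str β γ α // s.ι a₀ = b} = d * (k * cc d e k (m-1)) := by
        intro b hbne
        rw [Nat.card_congr (fiberB a₀ hbne), Nat.card_prod, Nat.card_prod]
        congr 2
        exact IH (m-1) (by omega) _ (by rw [card_pair_compl hbne, hα]; omega)
      rw [key, ← Finset.add_sum_erase _ _ (mem_univ a₀), hA,
        Finset.sum_congr rfl (fun b hbmem => hB b (Finset.ne_of_mem_erase hbmem)),
        Finset.sum_const, Finset.card_erase_of_mem (mem_univ a₀), Finset.card_univ, hα]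
      rw [cc_succ]
      simp only [Nat.add_sub_cancel, smul_eq_mul]
      ring


open Nat Finset

lemma card_order_two (d : ℕ) (hd : 0 < d) :
    Nat.card {x : ZMod d // x + x = 0 ∧ x ≠ 0} = if d % 2 = 0 then 1 else 0 := by
  haveI : NeZero d := ⟨hd.ne'⟩
  have valadd : ∀ x : ZMod d, x + x = 0 → d ∣ x.val + x.val := by
    intro x hx
    have h := congrArg ZMod.val hx
    rw [ZMod.val_add] at h
    simp only [ZMod.val_zero] at h
    exact Nat.dvd_of_mod_eq_zero h
  by_cases hpar : d % 2 = 0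
  · rw [if_pos hpar]
    obtain ⟨d', rfl⟩ : ∃ d', d = 2 * d' := ⟨d / 2, by omega⟩
    have hd' : 0 < d' := by omega
    have hval : ((d' : ZMod (2*d')).val) = d' := ZMod.val_cast_of_lt (by omega)
    rw [Nat.card_eq_one_iff_unique]
    constructor
    · constructor
      rintro ⟨x, hx1, hx2⟩ ⟨y, hy1, hy2⟩
      have key : ∀ z : ZMod (2*d'), z + z = 0 → z ≠ 0 → z.val = d' := by
        intro z hz1 hz2
        obtain ⟨c, hc⟩ := valadd z hz1
        have hlt : z.val < 2*d' := ZMod.val_lt z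
        have hne : z.val ≠ 0 := fun h => hz2 ((ZMod.val_eq_zero z).mp h)
        obtain hc0 | hc1 | hc2 : c = 0 ∨ c = 1 ∨ 2 ≤ c := by omega
        · subst hc0; omega
        · subst hc1; omega
        · have : 2*d'*2 ≤ 2*d'*c := Nat.mul_le_mul_left _ hc2
          omega
      apply Subtype.ext
      apply ZMod.val_injective
      rw [key x hx1 hx2, key y hy1 hy2]
    · refine ⟨⟨(d' : ZMod (2*d')), ?_, ?_⟩⟩
      · rw [← Nat.cast_add]
        have : d' + d' = 2 * d' := by ring
        rw [this, ZMod.natCast_self]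
      · intro h
        have := congrArg ZMod.val h
        rw [hval, ZMod.val_zero] at this
        omega
  · rw [if_neg hpar]
    have : IsEmpty {x : ZMod d // x + x = 0 ∧ x ≠ 0} := by
      constructor
      rintro ⟨x, hx1, hx2⟩
      obtain ⟨c, hc⟩ := valadd x hx1
      have hlt : x.val < d := ZMod.val_lt x
      have hne : x.val ≠ 0 := fun h => hx2 ((ZMod.val_eq_zero x).mp h)
      obtain hc0 | hc1 | hc2 : c = 0 ∨ c = 1 ∨ 2 ≤ c := by omega
      · subst hc0; omega
      · subst hc1; omega
      · have : d*2 ≤ d*c := Nat.mul_le_mul_left _ hc2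
        omega
    exact Nat.card_of_isEmpty

lemma exists_E (N g d : ℕ) (hg : 0 < g) (hd : 0 < d) (hN : g * d = N) :
    ∃ E : ZMod N ≃ ZMod g × ZMod d,
      ∀ x, E (x + (g : ZMod N)) = E x + (0, 1) := by
  haveI : NeZero N := ⟨by have := Nat.mul_pos hg hd; omega⟩
  haveI : NeZero g := ⟨hg.ne'⟩
  haveI : NeZero d := ⟨hd.ne'⟩
  set ψ : ZMod g × ZMod d → ZMod N := fun p => ((p.1.val + g * p.2.val : ℕ) : ZMod N) with hψ
  have hlt : ∀ p : ZMod g × ZMod d, p.1.val + g * p.2.val < N := by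
    rintro ⟨r, t⟩
    have hr : r.val < g := ZMod.val_lt r
    have ht : t.val < d := ZMod.val_lt t
    obtain ⟨e, rfl⟩ : ∃ e, d = e + 1 := ⟨d - 1, by omega⟩
    have : g * t.val ≤ g * e := Nat.mul_le_mul_left g (by omega)
    have hexp : g * (e + 1) = g * e + g := by ring
    simp only [← hN, hexp]
    omega
  have hinj : Function.Injective ψ := by
    rintro ⟨r, t⟩ ⟨r', t'⟩ hpq
    simp only [hψ] at hpq
    have h1 := congrArg ZMod.val hpq
    rw [ZMod.val_cast_of_lt (hlt (r, t)), ZMod.val_cast_of_lt (hlt (r', t'))] at h1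
    dsimp only at h1
    have hr : r.val < g := ZMod.val_lt r
    have hr' : r'.val < g := ZMod.val_lt r'
    have hmod : r.val = r'.val := by
      have e1 : (r.val + g * t.val) % g = r.val % g := Nat.add_mul_mod_self_left _ _ _
      have e2 : (r'.val + g * t'.val) % g = r'.val % g := Nat.add_mul_mod_self_left _ _ _
      rw [Nat.mod_eq_of_lt hr] at e1
      rw [Nat.mod_eq_of_lt hr'] at e2
      rw [← e1, ← e2, h1]
    have hdiv : t.val = t'.val := by
      have : g * t.val = g * t'.val := by omega
      exact Nat.eq_of_mul_eq_mul_left hg this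
    exact Prod.ext (ZMod.val_injective g hmod) (ZMod.val_injective d hdiv)
  have hbij : Function.Bijective ψ := by
    rw [Fintype.bijective_iff_injective_and_card]
    refine ⟨hinj, ?_⟩
    rw [Fintype.card_prod, ZMod.card, ZMod.card, ZMod.card, hN]
  refine ⟨(Equiv.ofBijective ψ hbij).symm, ?_⟩
  have hpsi_add : ∀ p : ZMod g × ZMod d, ψ (p + (0, 1)) = ψ p + (g : ZMod N) := by
    rintro ⟨r, t⟩
    show ((r + 0).val + g * (t + 1).val : ℕ) = ((r.val + g * t.val : ℕ) : ZMod N) + (g : ZMod N)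
    rw [add_zero]
    have key : ((g * (t+1).val : ℕ) : ZMod N) = ((g * t.val : ℕ) : ZMod N) + (g : ZMod N) := by
      have hdvd : (d : ℤ) ∣ ((t+1).val : ℤ) - (t.val + 1 : ℤ) := by
        rw [← ZMod.intCast_zmod_eq_zero_iff_dvd]
        push_cast
        rw [ZMod.natCast_rightInverse t, ZMod.natCast_rightInverse (t+1)]
        ring
      obtain ⟨c, hc⟩ := hdvd
      have hNdvd : (N : ℤ) ∣ (g * (t+1).val : ℤ) - (g * t.val + g : ℤ) := by
        refine ⟨c, ?_⟩
        have h5 : (g : ℤ) * ((t+1).val - (t.val + 1 : ℤ)) = (g : ℤ) * (d * c) := by rw [hc]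
        rw [← hN]
        push_cast
        push_cast at h5
        linear_combination h5
      have := (ZMod.intCast_zmod_eq_zero_iff_dvd _ N).mpr hNdvd
      push_cast at this
      push_cast
      linear_combination this
    push_cast at key ⊢
    linear_combination key
  intro x
  rw [Equiv.symm_apply_eq]
  show x + (g : ZMod N) = ψ ((Equiv.ofBijective ψ hbij).symm x + (0, 1))
  rw [hpsi_add]
  exact congrArg (· + (g : ZMod N)) ((Equiv.apply_symm_apply (Equiv.ofBijective ψ hbij) x).symm)


instance (n k : ℕ) : AddAction (ZMod (2*n)) (ColMatch n k) where
  vadd h m := ⟨⟨fun x => m.1.1 (x - h) + h, fun x => m.1.2 (x - h)⟩, by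
    refine ⟨fun x => ?_, fun x => ?_, fun x => ?_⟩
    · dsimp only
      rw [add_sub_cancel_right, m.2.1, sub_add_cancel]
    · dsimp only
      intro hx
      exact m.2.2.1 (x - h) (eq_sub_of_add_eq hx)
    · dsimp only
      rw [add_sub_cancel_right, m.2.2.2]⟩
  zero_vadd m := by
    apply Subtype.ext
    apply Prod.ext <;> funext x
    · show m.1.1 (x - 0) + 0 = m.1.1 x
      simp
    · show m.1.2 (x - 0) = m.1.2 x
      simp
  add_vadd a b m := by
    apply Subtype.ext
    apply Prod.ext <;> funext x
    · show m.1.1 (x - (a + b)) + (a + b) = (m.1.1 ((x - a) - b) + b) + a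
      rw [sub_sub]
      ring
    · show m.1.2 (x - (a + b)) = m.1.2 ((x - a) - b)
      rw [sub_sub]

lemma vadd_eq_iff {n k : ℕ} (h : ZMod (2*n)) (m : ColMatch n k) :
    h +ᵥ m = m ↔ (∀ x, m.1.1 (x + h) = m.1.1 x + h) ∧ (∀ x, m.1.2 (x + h) = m.1.2 x) := by
  constructor
  · intro hf
    have h1 : ∀ x, m.1.1 (x - h) + h = m.1.1 x := fun x =>
      congrFun (congrArg Prod.fst (congrArg Subtype.val hf)) x
    have h2 : ∀ x, m.1.2 (x - h) = m.1.2 x := fun x =>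
      congrFun (congrArg Prod.snd (congrArg Subtype.val hf)) x
    refine ⟨fun x => ?_, fun x => ?_⟩
    · have := h1 (x + h); rw [add_sub_cancel_right] at this; exact this.symm
    · have := h2 (x + h); rw [add_sub_cancel_right] at this; exact this.symm
  · rintro ⟨h1, h2⟩
    apply Subtype.ext
    apply Prod.ext
    · funext x
      show m.1.1 (x - h) + h = m.1.1 x
      have := h1 (x - h); rw [sub_add_cancel] at this; rw [← this]
    · funext x
      show m.1.2 (x - h) = m.1.2 x
      have := h2 (x - h); rw [sub_add_cancel] at this; exact this.symm

lemma fixed_gcd_iff {n k : ℕ} (hn : 0 < n) (h : ZMod (2*n)) (m : ColMatch n k) :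
    h +ᵥ m = m ↔ ((((2*n).gcd h.val : ℕ) : ZMod (2*n))) +ᵥ m = m := by
  haveI : NeZero (2*n) := ⟨by omega⟩
  have hmem : ∀ a : ZMod (2*n), (a +ᵥ m = m) ↔ a ∈ AddAction.stabilizer (ZMod (2*n)) m :=
    fun a => AddAction.mem_stabilizer_iff.symm
  rw [hmem, hmem]
  have hb := Nat.gcd_eq_gcd_ab (2*n) h.val
  constructor
  · intro hs
    have e1 : (((2*n : ℕ) : ℤ) : ZMod (2*n)) = 0 := by
      rw [Int.cast_natCast, ZMod.natCast_self]
    have e2 : ((h.val : ℤ) : ZMod (2*n)) = h := by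
      rw [Int.cast_natCast]; exact ZMod.natCast_rightInverse h
    have key : (((2*n).gcd h.val : ℕ) : ZMod (2*n)) = ((2*n).gcdB h.val) • h := by
      rw [zsmul_eq_mul]
      calc (((2*n).gcd h.val : ℕ) : ZMod (2*n))
          = ((((2*n).gcd h.val : ℕ) : ℤ) : ZMod (2*n)) := (Int.cast_natCast _).symm
        _ = (((2*n : ℕ) : ℤ) : ZMod (2*n)) * ((2*n).gcdA h.val : ZMod (2*n))
            + ((h.val : ℤ) : ZMod (2*n)) * ((2*n).gcdB h.val : ZMod (2*n)) := by
            rw [hb]; push_cast; ring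
        _ = 0 * ((2*n).gcdA h.val : ZMod (2*n)) + h * ((2*n).gcdB h.val : ZMod (2*n)) := by
            rw [e1, e2]
        _ = ((2*n).gcdB h.val : ZMod (2*n)) * h := by ring
    rw [key]
    exact AddSubgroup.zsmul_mem _ hs _
  · intro hs
    have hdvd : (2*n).gcd h.val ∣ h.val := Nat.gcd_dvd_right _ _
    have key : h = (h.val / (2*n).gcd h.val) • (((2*n).gcd h.val : ℕ) : ZMod (2*n)) := by
      rw [nsmul_eq_mul, ← Nat.cast_mul, Nat.div_mul_cancel hdvd]
      exact (ZMod.natCast_rightInverse h).symm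
    rw [key]
    exact AddSubgroup.nsmul_mem _ hs _

lemma card_fix (n k g d : ℕ) (hn : 0 < n) (hg : 0 < g) (hd : 0 < d) (hgd : g * d = 2*n) :
    Nat.card {m : ColMatch n k // ((g : ZMod (2*n))) +ᵥ m = m} =
      Nat.card (Str (ZMod d) (Fin k) (ZMod g)) := by
  haveI : NeZero (2*n) := ⟨by omega⟩
  haveI : NeZero g := ⟨hg.ne'⟩
  haveI : NeZero d := ⟨hd.ne'⟩
  obtain ⟨E, hE⟩ := exists_E (2*n) g d hg hd hgd
  have hEsymm : ∀ p : ZMod g × ZMod d,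
      E.symm (p + ((0:ZMod g), (1:ZMod d))) = E.symm p + (g : ZMod (2*n)) := by
    intro p
    have h0 := hE (E.symm p)
    rw [Equiv.apply_symm_apply] at h0
    rw [← h0, Equiv.symm_apply_apply]
  have L1 : ∀ (f : ZMod (2*n) → ZMod (2*n)), (∀ x, f (x + (g:ZMod (2*n))) = f x + (g:ZMod (2*n))) →
      ∀ (p : ZMod g × ZMod d) (t : ZMod d),
        E (f (E.symm (p + (0, t)))) = E (f (E.symm p)) + (0, t) := by
    intro f hf p t
    have main : ∀ tn : ℕ, E (f (E.symm (p + (0, (tn : ZMod d)))))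
        = E (f (E.symm p)) + (0, (tn : ZMod d)) := by
      intro tn
      induction tn with
      | zero => simp [Prod.mk_zero_zero]
      | succ tn ih =>
        have hcast : ((tn+1 : ℕ) : ZMod d) = (tn : ZMod d) + 1 := by push_cast; ring
        have hsplit : p + ((0 : ZMod g), (tn : ZMod d) + 1)
            = (p + ((0:ZMod g), (tn : ZMod d))) + ((0:ZMod g), (1:ZMod d)) := by
          rw [add_assoc]
          congr 1
          apply Prod.ext <;> simp
        rw [hcast, hsplit, hEsymm, hf, hE, ih, add_assoc]
        congr 1
        apply Prod.ext <;> simp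
    have h1 := main t.val
    rwa [ZMod.natCast_rightInverse t] at h1
  have L2 : ∀ (c : ZMod (2*n) → Fin k), (∀ x, c (x + (g:ZMod (2*n))) = c x) →
      ∀ (p : ZMod g × ZMod d) (t : ZMod d), c (E.symm (p + (0, t))) = c (E.symm p) := by
    intro c hc p t
    have main : ∀ tn : ℕ, c (E.symm (p + (0, (tn : ZMod d)))) = c (E.symm p) := by
      intro tn
      induction tn with
      | zero => simp [Prod.mk_zero_zero]
      | succ tn ih =>
        have hcast : ((tn+1 : ℕ) : ZMod d) = (tn : ZMod d) + 1 := by push_cast; ring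
        have hsplit : p + ((0 : ZMod g), (tn : ZMod d) + 1)
            = (p + ((0:ZMod g), (tn : ZMod d))) + ((0:ZMod g), (1:ZMod d)) := by
          rw [add_assoc]
          congr 1
          apply Prod.ext <;> simp
        rw [hcast, hsplit, hEsymm, hc, ih]
    have h1 := main t.val
    rwa [ZMod.natCast_rightInverse t] at h1
  have key : ∀ (f : ZMod (2*n) → ZMod (2*n)),
      (∀ x, f (x + (g:ZMod (2*n))) = f x + (g:ZMod (2*n))) →
      ∀ (r : ZMod g) (t : ZMod d),
      E (f (E.symm (r, t))) =
        ((E (f (E.symm (r, (0:ZMod d))))).1, (E (f (E.symm (r, (0:ZMod d))))).2 + t) := by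
    intro f hf r t
    have h2 : ((r, (0:ZMod d)) : ZMod g × ZMod d) + (0, t) = (r, t) := by
      apply Prod.ext <;> simp
    have h1 := L1 f hf (r, (0:ZMod d)) t
    rw [h2] at h1
    rw [h1]
    apply Prod.ext <;> simp
  have keyc : ∀ (c : ZMod (2*n) → Fin k), (∀ x, c (x + (g:ZMod (2*n))) = c x) →
      ∀ (r : ZMod g) (t : ZMod d), c (E.symm (r, t)) = c (E.symm (r, (0:ZMod d))) := by
    intro c hc r t
    have h2 : ((r, (0:ZMod d)) : ZMod g × ZMod d) + (0, t) = (r, t) := by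
      apply Prod.ext <;> simp
    have h1 := L2 c hc (r, (0:ZMod d)) t
    rw [h2] at h1
    exact h1
  apply Nat.card_congr
  exact
    { toFun := fun m =>
        { ι := fun r => (E (m.1.1.1 (E.symm (r, (0:ZMod d))))).1
          σ := fun r => (E (m.1.1.1 (E.symm (r, (0:ZMod d))))).2
          col := fun r => m.1.1.2 (E.symm (r, (0:ZMod d)))
          invol := by
            intro r
            have hf := ((vadd_eq_iff _ m.1).mp m.2).1
            have hmain : E (m.1.1.1 (E.symm (E (m.1.1.1 (E.symm (r, (0:ZMod d)))))))
                = (r, (0:ZMod d)) := by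
              rw [Equiv.symm_apply_apply, m.1.2.1, Equiv.apply_symm_apply]
            have hx := key m.1.1.1 hf (E (m.1.1.1 (E.symm (r, (0:ZMod d))))).1
              (E (m.1.1.1 (E.symm (r, (0:ZMod d))))).2
            rw [Prod.mk.eta] at hx
            have hcomb := hx.symm.trans hmain
            exact congrArg Prod.fst hcomb
          sig := by
            intro r
            have hf := ((vadd_eq_iff _ m.1).mp m.2).1
            have hmain : E (m.1.1.1 (E.symm (E (m.1.1.1 (E.symm (r, (0:ZMod d)))))))
                = (r, (0:ZMod d)) := by
              rw [Equiv.symm_apply_apply, m.1.2.1, Equiv.apply_symm_apply]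
            have hx := key m.1.1.1 hf (E (m.1.1.1 (E.symm (r, (0:ZMod d))))).1
              (E (m.1.1.1 (E.symm (r, (0:ZMod d))))).2
            rw [Prod.mk.eta] at hx
            have hcomb := hx.symm.trans hmain
            exact eq_neg_of_add_eq_zero_left (congrArg Prod.snd hcomb)
          fixne := by
            intro r hir hs0
            have hpair : E (m.1.1.1 (E.symm (r, (0:ZMod d)))) = (r, (0:ZMod d)) :=
              Prod.ext hir hs0
            have hfix : m.1.1.1 (E.symm (r, (0:ZMod d))) = E.symm (r, (0:ZMod d)) :=
              E.injective (by rw [hpair, Equiv.apply_symm_apply])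
            exact m.1.2.2.1 _ hfix
          coleq := by
            intro r
            have hc := ((vadd_eq_iff _ m.1).mp m.2).2
            calc m.1.1.2 (E.symm ((E (m.1.1.1 (E.symm (r, (0:ZMod d))))).1, (0:ZMod d)))
                = m.1.1.2 (E.symm ((E (m.1.1.1 (E.symm (r, (0:ZMod d))))).1,
                    (E (m.1.1.1 (E.symm (r, (0:ZMod d))))).2)) := (keyc m.1.1.2 hc _ _).symm
              _ = m.1.1.2 (E.symm (E (m.1.1.1 (E.symm (r, (0:ZMod d)))))) := by rw [Prod.mk.eta]
              _ = m.1.1.2 (m.1.1.1 (E.symm (r, (0:ZMod d)))) := by rw [Equiv.symm_apply_apply]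
              _ = m.1.1.2 (E.symm (r, (0:ZMod d))) := m.1.2.2.2 _ }
      invFun := fun s =>
        ⟨⟨⟨fun x => E.symm (s.ι (E x).1, s.σ (E x).1 + (E x).2), fun x => s.col (E x).1⟩, by
          refine ⟨fun x => ?_, fun x => ?_, fun x => ?_⟩
          · dsimp only
            rw [Equiv.apply_symm_apply]
            dsimp only
            rw [s.invol, s.sig, neg_add_cancel_left, Prod.mk.eta, Equiv.symm_apply_apply]
          · dsimp only
            intro heq
            rw [Equiv.symm_apply_eq] at heq
            have h1 : s.ι (E x).1 = (E x).1 := congrArg Prod.fst heq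
            have h2 : s.σ (E x).1 + (E x).2 = (E x).2 := congrArg Prod.snd heq
            exact s.fixne _ h1 (add_eq_right.mp h2)
          · dsimp only
            rw [Equiv.apply_symm_apply]
            dsimp only
            rw [s.coleq]⟩, by
          refine (vadd_eq_iff _ _).mpr ?_
          constructor
          · intro x
            dsimp only
            rw [hE]
            have hp : ((s.ι ((E x + ((0:ZMod g),(1:ZMod d))).1) : ZMod g),
                s.σ ((E x + ((0:ZMod g),(1:ZMod d))).1) + (E x + ((0:ZMod g),(1:ZMod d))).2)
                = ((s.ι ((E x).1), s.σ ((E x).1) + (E x).2) : ZMod g × ZMod d)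
                  + ((0:ZMod g), (1:ZMod d)) := by
              apply Prod.ext <;> simp [add_assoc]
            rw [hp, hEsymm]
          · intro x
            dsimp only
            rw [hE]
            congr 1
            simp⟩
      left_inv := by
        intro m
        have hf := ((vadd_eq_iff _ m.1).mp m.2).1
        have hc := ((vadd_eq_iff _ m.1).mp m.2).2
        apply Subtype.ext
        apply Subtype.ext
        apply Prod.ext
        · funext x
          dsimp only
          rw [← key m.1.1.1 hf (E x).1 (E x).2, Prod.mk.eta, Equiv.symm_apply_apply,
            Equiv.symm_apply_apply]
        · funext x
          dsimp only
          rw [← keyc m.1.1.2 hc (E x).1 (E x).2, Prod.mk.eta, Equiv.symm_apply_apply]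
      right_inv := by
        intro s
        apply Str.ext' <;> funext r <;> simp }


lemma cc_e_zero (dd kk g j0 : ℕ) (hg : g = 2*j0) :
    cc dd 0 kk g = ma g j0 * dd^j0 * kk^j0 := by
  rw [cc]
  rw [Finset.sum_eq_single j0]
  · rw [T, ma_eq (by omega)]
    have h1 : g - 2*j0 = 0 := by omega
    have h2 : g - j0 = j0 := by omega
    rw [h1, h2, pow_zero]
    ring
  · intro j hj hne
    rcases lt_or_gt_of_ne (show 2*j ≠ 2*j0 by omega) with hlt | hgt
    · have hnz : g - 2*j ≠ 0 := by omega
      rw [T, zero_pow hnz]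
      ring
    · exact T_eq_zero (by omega)
  · intro hj0
    exact absurd (Finset.mem_range.mpr (by omega)) hj0

lemma cc_e_one (dd kk g : ℕ) :
    cc dd 1 kk g = ∑ j ∈ Finset.range (g/2 + 1), ma g j * dd^j * kk^(g-j) := by
  rw [cc]
  have hsub : Finset.range (g/2+1) ⊆ Finset.range (g+1) := Finset.range_subset_range.mpr (by omega)
  have hvan : ∀ x ∈ Finset.range (g+1), x ∉ Finset.range (g/2+1) → T dd 1 kk g x = 0 := by
    intro x hx1 hx2
    rw [Finset.mem_range] at hx1
    rw [Finset.mem_range, not_lt] at hx2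
    exact T_eq_zero (by omega)
  rw [← Finset.sum_subset hsub hvan]
  apply Finset.sum_congr rfl
  intro j hj
  rw [Finset.mem_range] at hj
  rw [T, ma_eq (by omega : 2*j ≤ g), one_pow]
  ring

end Stmt17

open Stmt17

/-- Let `n, k ≥ 1`.  The number `N` of orbits of the `k`-colored perfect matchings on
`ℤ/2nℤ` under the rotation action `h·(f, c) = (x ↦ f(x-h)+h, x ↦ c(x-h))` of `ℤ/2nℤ`
satisfies
`2n·N = Σ_{d ∣ 2n, d odd} φ(d)·ma(2n/d, n/d)·d^{n/d}·k^{n/d}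
       + Σ_{d ∣ 2n, d even} φ(d)·Σ_{j=0}^{⌊(2n/d)/2⌋} ma(2n/d, j)·d^j·k^{2n/d - j}`. -/
theorem stmt_17 (n k : ℕ) (hn : 1 ≤ n) (hk : 1 ≤ k) (N : ℕ)
    (hN : N = Nat.card {s : Set (ColMatch n k) //
      ∃ m : ColMatch n k, s = {m' : ColMatch n k | ∃ h : ZMod (2 * n),
        m'.val.1 = (fun x => m.val.1 (x - h) + h) ∧
        m'.val.2 = fun x => m.val.2 (x - h)}}) :
    2 * n * N =
      (∑ d ∈ (2 * n).divisors.filter (fun d => d % 2 = 1),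
        d.totient * ma (2 * n / d) (n / d) * d ^ (n / d) * k ^ (n / d)) +
      ∑ d ∈ (2 * n).divisors.filter (fun d => d % 2 = 0),
        d.totient * ∑ j ∈ Finset.range (2 * n / d / 2 + 1),
          ma (2 * n / d) j * d ^ j * k ^ (2 * n / d - j) := by
  classical
  haveI : NeZero (2*n) := ⟨by omega⟩
  haveI hFin : Finite (ColMatch n k) := by
    unfold ColMatch
    infer_instance
  haveI : Fintype (ColMatch n k) := Fintype.ofFinite _
  haveI : ∀ a : ZMod (2*n), Fintype (AddAction.fixedBy (ColMatch n k) a) :=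
    fun a => Fintype.ofFinite _
  haveI : Fintype (Quotient (AddAction.orbitRel (ZMod (2*n)) (ColMatch n k))) :=
    Fintype.ofFinite _
  have burnside := AddAction.sum_card_fixedBy_eq_card_orbits_mul_card_addGroup
    (ZMod (2*n)) (ColMatch n k)
  have horb : ∀ m : ColMatch n k, {m' : ColMatch n k | ∃ h : ZMod (2*n),
      m'.val.1 = (fun x => m.val.1 (x - h) + h) ∧ m'.val.2 = fun x => m.val.2 (x - h)}
      = AddAction.orbit (ZMod (2*n)) m := by
    intro m
    ext m'
    simp only [Set.mem_setOf_eq, AddAction.mem_orbit_iff]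
    constructor
    · rintro ⟨h, h1, h2⟩
      exact ⟨h, Subtype.ext (Prod.ext h1 h2).symm⟩
    · rintro ⟨h, rfl⟩
      exact ⟨h, rfl, rfl⟩
  have hNcard : N = Fintype.card (Quotient (AddAction.orbitRel (ZMod (2*n)) (ColMatch n k))) := by
    rw [hN, ← Nat.card_eq_fintype_card]
    apply Nat.card_congr
    apply Equiv.symm
    refine Equiv.ofBijective (Quotient.lift (fun m : ColMatch n k =>
      (⟨AddAction.orbit (ZMod (2*n)) m, ⟨m, (horb m).symm⟩⟩ :
        {s : Set (ColMatch n k) // ∃ m : ColMatch n k, s = {m' : ColMatch n k |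
          ∃ h : ZMod (2*n), m'.val.1 = (fun x => m.val.1 (x - h) + h) ∧
            m'.val.2 = fun x => m.val.2 (x - h)}})) ?_) ⟨?_, ?_⟩
    · intro m1 m2 hrel
      exact Subtype.ext (AddAction.orbit_eq_iff.mpr (AddAction.orbitRel_apply.mp hrel))
    · intro q1 q2 heq
      induction q1 using Quotient.inductionOn with | _ m1 =>
      induction q2 using Quotient.inductionOn with | _ m2 =>
      apply Quotient.sound
      exact AddAction.orbitRel_apply.mpr (AddAction.orbit_eq_iff.mp (Subtype.ext_iff.mp heq))
    · rintro ⟨s, m, rfl⟩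
      exact ⟨⟦m⟧, Subtype.ext (horb m).symm⟩
  have hfix_card : ∀ a : ZMod (2*n), Fintype.card (AddAction.fixedBy (ColMatch n k) a)
      = Nat.card {m : ColMatch n k // (((2*n).gcd a.val : ℕ) : ZMod (2*n)) +ᵥ m = m} := by
    intro a
    rw [← Nat.card_eq_fintype_card]
    apply Nat.card_congr
    exact Equiv.subtypeEquivRight fun m =>
      (AddAction.mem_fixedBy).trans (fixed_gcd_iff (by omega) a m)
  have main : 2 * n * N = ∑ a : ZMod (2*n),
      Nat.card {m : ColMatch n k // (((2*n).gcd a.val : ℕ) : ZMod (2*n)) +ᵥ m = m} := by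
    have hs : ∑ a : ZMod (2*n),
        Nat.card {m : ColMatch n k // (((2*n).gcd a.val : ℕ) : ZMod (2*n)) +ᵥ m = m}
        = ∑ a : ZMod (2*n), Fintype.card (AddAction.fixedBy (ColMatch n k) a) :=
      Finset.sum_congr rfl (fun a _ => (hfix_card a).symm)
    rw [hs, burnside, ← hNcard, ZMod.card]
    ring
  have hrange : ∑ a : ZMod (2*n),
      Nat.card {m : ColMatch n k // (((2*n).gcd a.val : ℕ) : ZMod (2*n)) +ᵥ m = m}
      = ∑ i ∈ Finset.range (2*n),
        Nat.card {m : ColMatch n k // (((2*n).gcd i : ℕ) : ZMod (2*n)) +ᵥ m = m} := by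
    apply Finset.sum_nbij' (fun a : ZMod (2*n) => a.val) (fun i => (i : ZMod (2*n)))
    · intro a _; exact Finset.mem_range.mpr (ZMod.val_lt a)
    · intro i _; exact Finset.mem_univ _
    · intro a _; exact ZMod.natCast_rightInverse a
    · intro i hi; exact ZMod.val_cast_of_lt (Finset.mem_range.mp hi)
    · intro a _; rfl
  have hgroup : ∑ i ∈ Finset.range (2*n),
      Nat.card {m : ColMatch n k // (((2*n).gcd i : ℕ) : ZMod (2*n)) +ᵥ m = m}
      = ∑ g ∈ (2*n).divisors,
        (2*n/g).totient * Nat.card {m : ColMatch n k // ((g : ℕ) : ZMod (2*n)) +ᵥ m = m} := by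
    have hmaps : ∀ i ∈ Finset.range (2*n), (2*n).gcd i ∈ (2*n).divisors := by
      intro i _
      exact Nat.mem_divisors.mpr ⟨Nat.gcd_dvd_left _ _, by omega⟩
    rw [← Finset.sum_fiberwise_of_maps_to hmaps
      (fun i => Nat.card {m : ColMatch n k // (((2*n).gcd i : ℕ) : ZMod (2*n)) +ᵥ m = m})]
    apply Finset.sum_congr rfl
    intro g hg
    have hterm : ∀ i ∈ Finset.filter (fun i => (2*n).gcd i = g) (Finset.range (2*n)),
        Nat.card {m : ColMatch n k // (((2*n).gcd i : ℕ) : ZMod (2*n)) +ᵥ m = m}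
        = Nat.card {m : ColMatch n k // ((g : ℕ) : ZMod (2*n)) +ᵥ m = m} := by
      intro i hi
      rw [(Finset.mem_filter.mp hi).2]
    rw [Finset.sum_congr rfl hterm, Finset.sum_const, smul_eq_mul]
    congr 1
    exact (Nat.totient_div_of_dvd (Nat.mem_divisors.mp hg).1).symm
  have hreindex : ∑ g ∈ (2*n).divisors,
      (2*n/g).totient * Nat.card {m : ColMatch n k // ((g : ℕ) : ZMod (2*n)) +ᵥ m = m}
      = ∑ d ∈ (2*n).divisors,
        d.totient * Nat.card {m : ColMatch n k // (((2*n/d : ℕ)) : ZMod (2*n)) +ᵥ m = m} := by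
    rw [← Nat.sum_div_divisors (2*n)
      (fun g => (2*n/g).totient * Nat.card {m : ColMatch n k // ((g : ℕ) : ZMod (2*n)) +ᵥ m = m})]
    apply Finset.sum_congr rfl
    intro d hd
    rw [Nat.div_div_self (Nat.mem_divisors.mp hd).1 (by omega)]
  have hFFval : ∀ d ∈ (2*n).divisors,
      Nat.card {m : ColMatch n k // (((2*n/d : ℕ)) : ZMod (2*n)) +ᵥ m = m}
      = cc d (if d % 2 = 0 then 1 else 0) k (2*n/d) := by
    intro d hd
    obtain ⟨hdvd, -⟩ := Nat.mem_divisors.mp hd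
    have hd0 : 0 < d := Nat.pos_of_dvd_of_pos hdvd (by omega)
    have hg0 : 0 < 2*n/d := Nat.div_pos (Nat.le_of_dvd (by omega) hdvd) hd0
    have hgd : (2*n/d) * d = 2*n := Nat.div_mul_cancel hdvd
    rw [card_fix n k (2*n/d) d (by omega) hg0 hd0 hgd]
    haveI : NeZero (2*n/d) := ⟨hg0.ne'⟩
    haveI : NeZero d := ⟨hd0.ne'⟩
    rw [card_Str (ZMod d) (Fin k) (2*n/d) (ZMod (2*n/d)) (ZMod.card _)]
    have e1 : Nat.card (ZMod d) = d := Nat.card_zmod d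
    have e2 : Nat.card (Fin k) = k := by simp
    rw [e1, e2, card_order_two d hd0]
  rw [main, hrange, hgroup, hreindex,
    Finset.sum_congr rfl (fun d hd => by rw [hFFval d hd])]
  rw [← Finset.sum_filter_add_sum_filter_not ((2*n).divisors) (fun d => d % 2 = 1)]
  congr 1
  · apply Finset.sum_congr rfl
    intro d hd
    have hodd : d % 2 = 1 := (Finset.mem_filter.mp hd).2
    obtain hdvd := (Nat.mem_divisors.mp (Finset.mem_filter.mp hd).1).1
    rw [if_neg (by omega)]
    have hco : Nat.Coprime d 2 :=
      Nat.Coprime.symm ((Nat.Prime.coprime_iff_not_dvd Nat.prime_two).mpr (by omega))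
    have hdvdn : d ∣ n := Nat.Coprime.dvd_of_dvd_mul_left hco hdvd
    have hgj : 2*n/d = 2*(n/d) := Nat.mul_div_assoc 2 hdvdn
    rw [cc_e_zero d k (2*n/d) (n/d) hgj]
    ring
  · apply Finset.sum_congr (Finset.filter_congr (fun d _ => by omega))
    intro d hd
    have heven : d % 2 = 0 := (Finset.mem_filter.mp hd).2
    rw [if_pos heven, cc_e_one d k (2*n/d)]
end

section
/- Let n ≥ 1, k ≥ 1, and h ∈ {0, 1, …, 2n − 1}. Then the number of k-colored perfect matchings (f, c) on ℤ/2nℤ satisfying f(h − x) = h − f(x) and c(h − x) = c(x) for all x ∈ ℤ/2nℤ equals Σ_{j=0}^{⌊n/2⌋} ma(n, j)·2^j·k^{n−j} if h is odd, and equals Σ_{j=0}^{⌊(n−1)/2⌋} ma(n−1, j)·2^j·k^{n−j} if h is even. -/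
open Function Equiv Finset

section OrbitLabeling

variable {α β : Type*}

def OrbitLabeling (g : α → α) (p : β → Prop) : Type _ :=
  {w : α → β // (∀ a, w (g a) = w a) ∧ ∀ a, g a = a → p (w a)}

instance [Finite α] [Finite β] (g : α → α) (p : β → Prop) : Finite (OrbitLabeling g p) :=
  Subtype.finite

variable [LinearOrder α] {g : α → α}

/-- An orbit labeling is determined by its values at `min a (g a)`, the points `a ≤ g a`. -/
def OrbitLabeling.equivPiLe (hg : Involutive g) (p : β → Prop) :
    OrbitLabeling g p ≃ ∀ a : {a // a ≤ g a}, {b // g a = a → p b} where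
  toFun w a := ⟨w.1 a, w.2.2 a⟩
  invFun u := ⟨fun a => u ⟨min a (g a), by
      rcases le_total a (g a) with h | h <;> simp [h, hg a]⟩,
    fun a => congrArg (fun x => (u x : β)) (Subtype.ext (by simp only [hg a, min_comm])),
    fun a ha => (u _).2 (by simp [ha])⟩
  left_inv w := Subtype.ext <| funext fun a => by
    rcases le_total a (g a) with h | h <;> simp [h, w.2.1]
  right_inv u := funext fun ⟨a, ha⟩ => Subtype.ext <|
    congrArg (fun x => (u x : β)) (Subtype.ext (min_eq_left ha))

theorem OrbitLabeling.card_eq [Fintype α] (hg : Involutive g) (p : β → Prop) :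
    Nat.card (OrbitLabeling g p) =
      Nat.card {b // p b} ^ #{a | g a = a} * Nat.card β ^ #{a | a < g a} := by
  have hfactor (a : α) : Nat.card {b // g a = a → p b} =
      if g a = a then Nat.card {b // p b} else Nat.card β := by
    split_ifs with ha <;> simp [ha]
  rw [Nat.card_congr (equivPiLe hg p), Nat.card_pi]
  simp only [hfactor]
  rw [← prod_subtype {a | a ≤ g a} (by simp)
      (fun a => if g a = a then Nat.card {b // p b} else Nat.card β),
    prod_ite, prod_const, prod_const, filter_filter, filter_filter]
  congr 3 <;> ext a <;> simp only [mem_filter, mem_univ, true_and]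
  · exact and_iff_right_of_imp fun h => h.ge
  · rw [lt_iff_le_and_ne, ne_comm]

end OrbitLabeling

namespace Equiv.Perm

variable {α : Type*}

theorem sq_eq_one_iff_involutive {g : Perm α} : g ^ 2 = 1 ↔ Involutive g :=
  ⟨fun h a => by rw [← Perm.mul_apply, ← sq, h, Perm.one_apply], fun h => Equiv.ext h⟩

variable [Fintype α]

section DecidableEq

variable [DecidableEq α] {g : Perm α}

theorem card_filter_cycleType_eq_replicate_two {j : ℕ} (hj : 2 * j ≤ Fintype.card α) :
    #{g : Perm α | g.cycleType = .replicate j 2} = ma (Fintype.card α) j := by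
  rw [card_of_cycleType, if_pos ⟨by simpa [mul_comm] using hj,
    fun a ha => (Multiset.eq_of_mem_replicate ha).ge⟩, ma]
  rcases j.eq_zero_or_pos with rfl | hj0
  · simp
  · simp [Multiset.toFinset_replicate, hj0.ne', mul_comm]

theorem two_mul_card_cycleType_of_sq_eq_one (hg : g ^ 2 = 1) :
    2 * g.cycleType.card = #g.support := by
  rw [← sum_cycleType, cycleType_of_pow_prime_eq_one hg]
  simp [mul_comm]

theorem card_filter_apply_eq_self_of_sq_eq_one (hg : g ^ 2 = 1) :
    #{a | g a = a} = Fintype.card α - 2 * g.cycleType.card := by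
  rw [two_mul_card_cycleType_of_sq_eq_one hg, ← card_univ,
    ← card_filter_add_card_filter_not (s := univ) (fun a => g a = a)]
  simp [support]

theorem sum_sq_eq_one_eq_sum_ma (F : ℕ → ℕ) :
    ∑ g : {g : Perm α // g ^ 2 = 1}, F g.1.cycleType.card =
      ∑ j ∈ range (Fintype.card α / 2 + 1), ma (Fintype.card α) j * F j := by
  have hmaps : ∀ g ∈ ({g | g ^ 2 = 1} : Finset (Perm α)),
      g.cycleType.card ∈ range (Fintype.card α / 2 + 1) := fun g hg => by
    have := (two_mul_card_cycleType_of_sq_eq_one (mem_filter.1 hg).2).trans_le (card_le_univ _)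
    rw [mem_range]; omega
  rw [← sum_subtype ({g | g ^ 2 = 1} : Finset (Perm α)) (by simp)
      (fun g : Perm α => F g.cycleType.card), ← sum_fiberwise_of_maps_to hmaps]
  refine sum_congr rfl fun j hj => ?_
  have hfiber : ({g | g ^ 2 = 1 ∧ g.cycleType.card = j} : Finset (Perm α)) =
      ({g | g.cycleType = .replicate j 2} : Finset (Perm α)) := by
    ext g
    simp only [mem_filter, mem_univ, true_and]
    refine ⟨fun ⟨hg, hj⟩ => hj ▸ cycleType_of_pow_prime_eq_one hg, fun h => ⟨?_, by simp [h]⟩⟩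
    exact pow_prime_eq_one_iff.2 fun c hc => Multiset.eq_of_mem_replicate (h ▸ hc)
  rw [sum_congr rfl fun g hg => congrArg F (mem_filter.1 hg).2, sum_const, smul_eq_mul,
    filter_filter, hfiber,
    card_filter_cycleType_eq_replicate_two (by rw [mem_range] at hj; omega)]

end DecidableEq

variable [LinearOrder α] {g : Perm α}

theorem card_filter_lt_apply_of_sq_eq_one (hg : g ^ 2 = 1) : #{a | a < g a} = g.cycleType.card := by
  have hinv := sq_eq_one_iff_involutive.1 hg
  have hswap : #{a | g a < a} = #{a | a < g a} :=
    card_nbij' g g (fun a ha => by simp_all [hinv a]) (fun a ha => by simp_all [hinv a])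
      (fun a _ => hinv a) (fun a _ => hinv a)
  have hsupp : g.support = ({a | a < g a} : Finset α) ∪ ({a | g a < a} : Finset α) := by
    ext a; simp [lt_or_lt_iff_ne, eq_comm]
  have := two_mul_card_cycleType_of_sq_eq_one hg
  rw [hsupp, card_union_of_disjoint (disjoint_filter.2 fun a _ h => h.not_gt), hswap] at this
  omega

theorem card_orbitLabeling_of_sq_eq_one {β : Type*} (hg : g ^ 2 = 1) (p : β → Prop) :
    Nat.card (OrbitLabeling g p) =
      Nat.card {b // p b} ^ (Fintype.card α - 2 * g.cycleType.card) *
        Nat.card β ^ g.cycleType.card := by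
  rw [OrbitLabeling.card_eq (sq_eq_one_iff_involutive.1 hg), card_filter_apply_eq_self_of_sq_eq_one hg,
    card_filter_lt_apply_of_sq_eq_one hg]

end Equiv.Perm

section Matchings

variable {α γ δ κ : Type*}

def IsSymColoredMatching (σ f : γ → γ) (c : γ → κ) : Prop :=
  (∀ x, f (f x) = x) ∧ (∀ x, f x ≠ x) ∧ (∀ x, c (f x) = c x) ∧
    (∀ x, f (σ x) = σ (f x)) ∧ (∀ x, c (σ x) = c x)

def SymColoredMatching (σ : γ → γ) (κ : Type*) : Type _ :=
  {fc : (γ → γ) × (γ → κ) // IsSymColoredMatching σ fc.1 fc.2}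

def SymColoredMatching.congr {σ : δ → δ} {τ : γ → γ} (e : δ ≃ γ)
    (he : ∀ x, e (σ x) = τ (e x)) : SymColoredMatching σ κ ≃ SymColoredMatching τ κ :=
  (e.arrowCongr e).prodCongr (e.arrowCongr (Equiv.refl κ)) |>.subtypeEquiv fun fc => by
    have he' : ∀ y, e.symm (τ y) = σ (e.symm y) := fun y => by
      rw [e.symm_apply_eq, he, e.apply_symm_apply]
    simp only [IsSymColoredMatching, Equiv.prodCongr_apply, Prod.map, Equiv.arrowCongr_apply,
      comp_apply, Equiv.refl_apply, he']
    refine and_congr ?_ (and_congr ?_ (and_congr ?_ (and_congr ?_ ?_))) <;>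
      exact e.forall_congr fun x => by simp [← he]

theorem isSymColoredMatching_sumMap_iff {σ f : γ → γ} {c : γ ⊕ Bool → κ} :
    IsSymColoredMatching (Sum.map σ id) (Sum.map f not) c ↔
      IsSymColoredMatching σ f (c ∘ Sum.inl) ∧ c (.inr true) = c (.inr false) := by
  simp only [IsSymColoredMatching, Sum.map_map, Sum.forall, Sum.map_inl, comp_apply,
    Sum.inl.injEq, Sum.map_inr, Bool.not_not, implies_true, and_true, ne_eq, Sum.inr.injEq,
    Bool.not_eq_eq_eq_not, Bool.eq_not_self, not_false_eq_true, Bool.forall_bool, Bool.not_false,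
    Bool.not_true, CompTriple.comp_eq, id_eq]
  exact ⟨fun ⟨h1, h2, ⟨h3, h4, _⟩, h5, h6⟩ => ⟨⟨h1, h2, h3, h5, h6⟩, h4⟩,
    fun ⟨⟨h1, h2, h3, h5, h6⟩, h4⟩ => ⟨h1, h2, ⟨h3, h4, h4.symm⟩, h5, h6⟩⟩

/-- The two points of `Bool` are the only fixed points of `Sum.map σ id`, so a symmetric matching
pairs them with each other and preserves `γ`. -/
theorem IsSymColoredMatching.eq_sumMap {σ : γ → γ} (hσ : ∀ x, σ x ≠ x)
    {F : γ ⊕ Bool → γ ⊕ Bool} {c : γ ⊕ Bool → κ}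
    (hF : IsSymColoredMatching (Sum.map σ id) F c) :
    F = Sum.map (fun x => (F (.inl x)).elim id fun _ => x) not := by
  obtain ⟨hinv, hne, -, hσF, -⟩ := hF
  have hinr (b : Bool) : F (.inr b) = .inr !b := by
    have hfix := hσF (.inr b)
    have hb := hne (.inr b)
    rcases hFb : F (.inr b) with y | b'
    · simp only [Sum.map_inr, id, hFb, Sum.map_inl, Sum.inl.injEq] at hfix
      exact absurd hfix.symm (hσ y)
    · rw [hFb] at hb; cases b <;> cases b' <;> simp_all
  funext x
  rcases x with x | b
  · rcases hx : F (.inl x) with y | b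
    · simp [hx]
    · have := hinv (.inl x); rw [hx, hinr] at this; cases this
  · simp [hinr]

def SymColoredMatching.sumBoolEquiv {σ : γ → γ} (hσ : ∀ x, σ x ≠ x) :
    SymColoredMatching (Sum.map σ id : γ ⊕ Bool → γ ⊕ Bool) κ ≃
      κ × SymColoredMatching σ κ where
  toFun F := (F.1.2 (.inr false), ⟨(fun x => (F.1.1 (.inl x)).elim id fun _ => x, F.1.2 ∘ .inl),
    (isSymColoredMatching_sumMap_iff.1 (F.2.eq_sumMap hσ ▸ F.2)).1⟩)
  invFun qf := ⟨(Sum.map qf.2.1.1 not, Sum.elim qf.2.1.2 fun _ => qf.1),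
    isSymColoredMatching_sumMap_iff.2 ⟨qf.2.2, rfl⟩⟩
  left_inv F := by
    obtain ⟨⟨F, c⟩, hF⟩ := F
    have hc : c (.inr true) = c (.inr false) :=
      (isSymColoredMatching_sumMap_iff.1 (hF.eq_sumMap hσ ▸ hF)).2
    refine Subtype.ext (Prod.ext (hF.eq_sumMap hσ).symm (funext ?_))
    rintro (x | _ | _) <;> simp [hc]
  right_inv qf := rfl

theorem isSymColoredMatching_twist_iff {g : α → α} {w : α → Bool × κ} :
    IsSymColoredMatching (Prod.map id not) (fun x => (g x.1, xor (w x.1).1 x.2))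
      (fun x => (w x.1).2) ↔
      Involutive g ∧ (∀ a, w (g a) = w a) ∧ ∀ a, g a = a → (w a).1 = true := by
  simp only [IsSymColoredMatching, Prod.ext_iff, forall_and, Prod.forall, forall_const,
    Bool.forall_bool, Bool.bne_false, bne_eq_false_iff_eq, Bool.bne_true, Bool.bne_not,
    Bool.not_eq_eq_eq_not, Bool.not_true, and_self, ne_eq, not_and, Bool.not_eq_false,
    Prod.map_fst, id_eq, Prod.map_snd, Prod.map_apply, implies_true, and_true, Involutive]
  tauto

theorem IsSymColoredMatching.eq_twist {f : α × Bool → α × Bool} {c : α × Bool → κ}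
    (hf : IsSymColoredMatching (Prod.map id not) f c) :
    f = (fun x => ((f (x.1, false)).1, xor (f (x.1, false)).2 x.2)) ∧
      c = fun x => c (x.1, false) := by
  obtain ⟨-, -, -, hf, hc⟩ := hf
  refine ⟨funext fun ⟨a, b⟩ => ?_, funext fun ⟨a, b⟩ => ?_⟩ <;> cases b
  · simp
  · simpa [Prod.map] using hf (a, false)
  · rfl
  · simpa using hc (a, false)

def SymColoredMatching.prodBoolEquiv :
    SymColoredMatching (Prod.map id not : α × Bool → α × Bool) κ ≃
      Σ g : {g : Perm α // g ^ 2 = 1}, OrbitLabeling g.1 fun w : Bool × κ => w.1 = true where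
  toFun F :=
    have hF := (isSymColoredMatching_twist_iff (g := fun a => (F.1.1 (a, false)).1)
      (w := fun a => ((F.1.1 (a, false)).2, F.1.2 (a, false)))).1
        (F.2.eq_twist.1 ▸ F.2.eq_twist.2 ▸ F.2)
    ⟨⟨hF.1.toPerm _, Perm.sq_eq_one_iff_involutive.2 hF.1⟩,
      ⟨fun a => ((F.1.1 (a, false)).2, F.1.2 (a, false)), hF.2⟩⟩
  invFun gw := ⟨(fun x => (gw.1.1 x.1, xor (gw.2.1 x.1).1 x.2), fun x => (gw.2.1 x.1).2),
    isSymColoredMatching_twist_iff.2 ⟨Perm.sq_eq_one_iff_involutive.1 gw.1.2, gw.2.2⟩⟩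
  left_inv F := Subtype.ext (Prod.ext F.2.eq_twist.1.symm F.2.eq_twist.2.symm)
  right_inv gw :=
    Sigma.subtype_ext (Subtype.ext (Equiv.ext fun _ => rfl)) (funext fun _ => by simp)

end Matchings

namespace SymColoredMatching

variable {α κ : Type*} [Fintype α] [Fintype κ]

theorem card_prodBool :
    Nat.card (SymColoredMatching (Prod.map id not : α × Bool → α × Bool) κ) =
      ∑ j ∈ range (Fintype.card α / 2 + 1),
        ma (Fintype.card α) j * 2 ^ j * Fintype.card κ ^ (Fintype.card α - j) := by
  let : LinearOrder α := LinearOrder.lift' _ (Fintype.equivFin α).injective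
  have hfiber (g : {g : Perm α // g ^ 2 = 1}) :
      Nat.card (OrbitLabeling g.1 fun w : Bool × κ => w.1 = true) =
        2 ^ g.1.cycleType.card * Fintype.card κ ^ (Fintype.card α - g.1.cycleType.card) := by
    have hle := (Perm.two_mul_card_cycleType_of_sq_eq_one g.2).trans_le (card_le_univ _)
    have hκ : Nat.card {w : Bool × κ // w.1 = true} = Fintype.card κ := by
      rw [Nat.card_congr (Equiv.prodSubtypeFstEquivSubtypeProd (p := (· = true))),
        Nat.card_prod]
      simp
    rw [Perm.card_orbitLabeling_of_sq_eq_one g.2, hκ, Nat.card_eq_fintype_card, Fintype.card_prod,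
      Fintype.card_bool, mul_pow, mul_left_comm, ← pow_add]
    congr 2
    omega
  rw [Nat.card_congr prodBoolEquiv, Nat.card_sigma, Fintype.sum_congr _ _ hfiber,
    Perm.sum_sq_eq_one_eq_sum_ma fun j => 2 ^ j * Fintype.card κ ^ (Fintype.card α - j)]
  simp only [mul_assoc]

theorem card_sumBool :
    Nat.card (SymColoredMatching (Sum.map (Prod.map id not) id : α × Bool ⊕ Bool → _) κ) =
      Fintype.card κ * ∑ j ∈ range (Fintype.card α / 2 + 1),
        ma (Fintype.card α) j * 2 ^ j * Fintype.card κ ^ (Fintype.card α - j) := by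
  rw [Nat.card_congr (sumBoolEquiv fun x => by simp [Prod.ext_iff]), Nat.card_prod,
    card_prodBool, Nat.card_eq_fintype_card]

end SymColoredMatching

theorem ZMod.bijective_add_intCast {ι : Type*} [Fintype ι] {N : ℕ} [NeZero N]
    (hcard : Fintype.card ι = N) {o : ι → ℤ} (ho : Injective o)
    (hspread : ∀ i j, o i - o j < N) (s : ZMod N) : Bijective fun i => s + (o i : ZMod N) := by
  refine (Fintype.bijective_iff_injective_and_card _).2 ⟨fun i j hij => ho ?_, by simp [hcard]⟩
  have hdvd := (ZMod.intCast_eq_intCast_iff_dvd_sub _ _ _).1 (add_left_cancel hij)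
  have := Int.eq_zero_of_abs_lt_dvd hdvd (abs_sub_lt_iff.2 ⟨hspread _ _, hspread _ _⟩)
  omega

section Transversal

variable (n : ℕ) [NeZero n] {κ : Type*} [Fintype κ]

/-- Offsets from `s` of a transversal of the free orbits of `x ↦ 2s + 1 - x` on `ℤ/2nℤ`; they
fill the window `(-n, n]`. -/
def oddOffset (p : Fin n × Bool) : ℤ := if p.2 then -p.1 else p.1 + 1

/-- Offsets from `s` of a transversal of the free orbits of `x ↦ 2s - x` on `ℤ/2nℤ`, followed by
its two fixed points `s` and `s + n`; they fill the window `(-n, n]`. -/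
def evenOffset : (Fin (n - 1) × Bool) ⊕ Bool → ℤ
  | .inl (i, b) => if b then -(i + 1) else i + 1
  | .inr b => if b then n else 0

noncomputable def oddTransversal (s : ZMod (2 * n)) : Fin n × Bool ≃ ZMod (2 * n) :=
  .ofBijective _ <| ZMod.bijective_add_intCast (by simp; ring) (o := oddOffset n)
    (by rintro ⟨i, _ | _⟩ ⟨j, _ | _⟩ <;> simp [oddOffset, Fin.ext_iff] <;> omega)
    (by rintro ⟨i, _ | _⟩ ⟨j, _ | _⟩ <;> simp [oddOffset] <;> omega) s

theorem oddTransversal_twist (s : ZMod (2 * n)) (p : Fin n × Bool) :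
    oddTransversal n s (Prod.map id not p) = 2 * s + 1 - oddTransversal n s p := by
  obtain ⟨i, _ | _⟩ := p <;> simp [oddTransversal, oddOffset] <;> ring

noncomputable def evenTransversal (s : ZMod (2 * n)) :
    (Fin (n - 1) × Bool) ⊕ Bool ≃ ZMod (2 * n) :=
  have := NeZero.one_le (n := n)
  .ofBijective _ <| ZMod.bijective_add_intCast (by simp; omega) (o := evenOffset n)
    (by rintro (⟨i, _ | _⟩ | _ | _) (⟨j, _ | _⟩ | _ | _) <;>
      simp [evenOffset, Fin.ext_iff] <;> omega)
    (by rintro (⟨i, _ | _⟩ | _ | _) (⟨j, _ | _⟩ | _ | _) <;> simp [evenOffset] <;> omega) s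

theorem evenTransversal_twist (s : ZMod (2 * n)) (u : (Fin (n - 1) × Bool) ⊕ Bool) :
    evenTransversal n s (Sum.map (Prod.map id not) id u) = 2 * s - evenTransversal n s u := by
  have h2n : (2 * n : ZMod (2 * n)) = 0 := by exact_mod_cast ZMod.natCast_self (2 * n)
  rcases u with ⟨i, _ | _⟩ | _ | _ <;> simp [evenTransversal, evenOffset]
  · ring
  · ring
  · ring
  · linear_combination h2n

theorem card_symColoredMatching_reflection_odd (s : ZMod (2 * n)) :
    Nat.card (SymColoredMatching (fun x : ZMod (2 * n) => 2 * s + 1 - x) κ) =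
      ∑ j ∈ range (n / 2 + 1), ma n j * 2 ^ j * Fintype.card κ ^ (n - j) := by
  rw [← Nat.card_congr
      (SymColoredMatching.congr (oddTransversal n s) (oddTransversal_twist n s)),
    SymColoredMatching.card_prodBool, Fintype.card_fin]

theorem card_symColoredMatching_reflection_even (s : ZMod (2 * n)) :
    Nat.card (SymColoredMatching (fun x : ZMod (2 * n) => 2 * s - x) κ) =
      ∑ j ∈ range ((n - 1) / 2 + 1), ma (n - 1) j * 2 ^ j * Fintype.card κ ^ (n - j) := by
  rw [← Nat.card_congr
      (SymColoredMatching.congr (evenTransversal n s) (evenTransversal_twist n s)),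
    SymColoredMatching.card_sumBool, Fintype.card_fin, mul_sum]
  refine sum_congr rfl fun j hj => ?_
  have := NeZero.one_le (n := n)
  rw [mem_range] at hj
  rw [show n - j = n - 1 - j + 1 by omega, pow_succ]
  ring

end Transversal

theorem stmt_18_general (n k : ℕ) (hn : 1 ≤ n) (h : ℕ) :
    Nat.card {fc : (ZMod (2 * n) → ZMod (2 * n)) × (ZMod (2 * n) → Fin k) //
      (∀ x, fc.1 (fc.1 x) = x) ∧ (∀ x, fc.1 x ≠ x) ∧ (∀ x, fc.2 (fc.1 x) = fc.2 x) ∧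
      (∀ x, fc.1 ((h : ZMod (2 * n)) - x) = (h : ZMod (2 * n)) - fc.1 x) ∧
      (∀ x, fc.2 ((h : ZMod (2 * n)) - x) = fc.2 x)} =
    if h % 2 = 1 then ∑ j ∈ Finset.range (n / 2 + 1), ma n j * 2 ^ j * k ^ (n - j)
    else ∑ j ∈ Finset.range ((n - 1) / 2 + 1), ma (n - 1) j * 2 ^ j * k ^ (n - j) := by
  have : NeZero n := ⟨by omega⟩
  change Nat.card (SymColoredMatching (fun x : ZMod (2 * n) => (h : ZMod (2 * n)) - x) (Fin k)) = _
  have hdiv : (h : ZMod (2 * n)) = 2 * (h / 2 : ℕ) + (h % 2 : ℕ) := by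
    exact_mod_cast congrArg Nat.cast (Nat.div_add_mod h 2).symm
  split_ifs with hodd
  · rw [hdiv, hodd, Nat.cast_one, card_symColoredMatching_reflection_odd, Fintype.card_fin]
  · rw [hdiv, show h % 2 = 0 by omega, Nat.cast_zero, add_zero,
      card_symColoredMatching_reflection_even, Fintype.card_fin]

/-- Let `n, k ≥ 1` and `h ∈ {0,…,2n-1}`.  The number of `k`-colored perfect matchings
`(f, c)` on `ℤ/2nℤ` satisfying `f(h - x) = h - f(x)` and `c(h - x) = c(x)` for all `x`
equals `Σ_{j=0}^{⌊n/2⌋} ma(n, j)·2^j·k^{n-j}` if `h` is odd, and equals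
`Σ_{j=0}^{⌊(n-1)/2⌋} ma(n-1, j)·2^j·k^{n-j}` if `h` is even. -/
theorem stmt_18 (n k : ℕ) (hn : 1 ≤ n) (hk : 1 ≤ k) (h : ℕ) (hh : h < 2 * n) :
    Nat.card {fc : (ZMod (2 * n) → ZMod (2 * n)) × (ZMod (2 * n) → Fin k) //
      (∀ x, fc.1 (fc.1 x) = x) ∧ (∀ x, fc.1 x ≠ x) ∧ (∀ x, fc.2 (fc.1 x) = fc.2 x) ∧
      (∀ x, fc.1 ((h : ZMod (2 * n)) - x) = (h : ZMod (2 * n)) - fc.1 x) ∧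
      (∀ x, fc.2 ((h : ZMod (2 * n)) - x) = fc.2 x)} =
    if h % 2 = 1 then ∑ j ∈ Finset.range (n / 2 + 1), ma n j * 2 ^ j * k ^ (n - j)
    else ∑ j ∈ Finset.range ((n - 1) / 2 + 1), ma (n - 1) j * 2 ^ j * k ^ (n - j) :=
  stmt_18_general n k hn h
end

section
/- Let n ≥ 1 and k ≥ 1. An element of ℤ/2nℤ is called odd if its image under the natural reduction homomorphism ℤ/2nℤ → ℤ/2ℤ is 1. Consider the set of triples (f, c, ε) where (f, c) is a k-colored perfect matching on ℤ/2nℤ such that x + f(x) is odd for every x ∈ ℤ/2nℤ, and ε ∈ ℤ/2ℤ. The additive group ℤ/2nℤ acts on this set by h·(f, c, ε) = (x ↦ f(x − h) + h, x ↦ c(x − h), ε + h̄), where h̄ ∈ ℤ/2ℤ is the reduction of h. Then the number N of orbits of this action satisfies n·N = Σ_{d | n} φ(d)·(n/d)!·d^{n/d}·k^{n/d}, the sum being over all positive divisors d of n. -/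
/-- Signed `k`-colored perfect matchings on `ℤ/2nℤ` whose pairs `{x, f x}` each consist
of one even and one odd element (i.e. `x + f x` reduces to `1` in `ℤ/2ℤ`), together with
a sign `ε ∈ ℤ/2ℤ`. -/
def SgnColMatch (n k : ℕ) : Type :=
  {t : (ZMod (2 * n) → ZMod (2 * n)) × (ZMod (2 * n) → Fin k) × ZMod 2 //
    (∀ x, t.1 (t.1 x) = x) ∧ (∀ x, t.1 x ≠ x) ∧ (∀ x, t.2.1 (t.1 x) = t.2.1 x) ∧
    (∀ x, ZMod.castHom (dvd_mul_right 2 n) (ZMod 2) (x + t.1 x) = 1)}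

/-!
By Burnside's lemma, `2n · N` is the sum over `h ∈ ℤ/2nℤ` of the number of triples fixed by `h`.
An odd `h` changes the sign `ε`, so it fixes nothing. Writing the elements of `ℤ/2nℤ` as `2a` and
`2a + 1` with `a ∈ ℤ/nℤ`, a matching with `x + f x` odd is a permutation `σ` of `ℤ/nℤ`
(`f (2a) = 2σ(a) + 1`) and its colouring is a colouring of `ℤ/nℤ`; translation by `h = 2g` fixes
the triple iff `σ` commutes with `· + g` and the colouring is `g`-periodic. The subgroup `⟨g⟩`, of
some order `d ∣ n`, acts freely on `ℤ/nℤ` with `n / d` orbits, so such a `σ` is a permutation of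
the orbits together with a shift in `⟨g⟩` on each orbit, `(n/d)! · d^(n/d)` choices, and there are
`k^(n/d)` periodic colourings. Finally, `φ d` elements of `ℤ/nℤ` have order `d`.
-/

open Equiv Function AddAction Nat

local notation "parity" => ZMod.castHom (dvd_mul_right 2 _) (ZMod 2)

section ProdAdd
variable {Ω H : Type*} [AddGroup H]

theorem apply_mk_eq_of_forall_add {ψ : Ω × H → Ω × H}
    (hψ : ∀ q h h', ψ (q, h + h') = ((ψ (q, h')).1, h + (ψ (q, h')).2)) (q : Ω) (h : H) :
    ψ (q, h) = ((ψ (q, 0)).1, h + (ψ (q, 0)).2) := by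
  simpa using hψ q h 0

def Equiv.Perm.prodAddEquivariantEquiv :
    {ψ : Perm (Ω × H) // ∀ q h h', ψ (q, h + h') = ((ψ (q, h')).1, h + (ψ (q, h')).2)} ≃
      Perm Ω × (Ω → H) where
  toFun ψ :=
    ({ toFun q := (ψ.1 (q, 0)).1
       invFun r := (ψ.1.symm (r, 0)).1
       left_inv q := by
         have : ψ.1 (q, -(ψ.1 (q, 0)).2) = ((ψ.1 (q, 0)).1, 0) := by
           rw [apply_mk_eq_of_forall_add ψ.2, neg_add_cancel]
         simp [← this]
       right_inv r := by
         have := ψ.1.apply_symm_apply (r, 0)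
         rw [← Prod.mk.eta (p := ψ.1.symm (r, 0)), apply_mk_eq_of_forall_add ψ.2] at this
         exact congrArg Prod.fst this },
      fun q => (ψ.1 (q, 0)).2)
  invFun p := ⟨prodShear p.1 fun q => Equiv.addRight (p.2 q), fun q h h' => by simp [add_assoc]⟩
  left_inv ψ := by
    ext ⟨q, h⟩ <;> simp [apply_mk_eq_of_forall_add ψ.2 q h]
  right_inv p := by
    ext <;> simp

end ProdAdd

namespace AddAction

variable {H X : Type*} [AddGroup H] [AddAction H X]

variable (H X) in
noncomputable def orbitsProdEquiv [IsCancelVAdd H X] : orbitRel.Quotient H X × H ≃ X :=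
  Equiv.ofBijective (fun p => p.2 +ᵥ p.1.out) <| by
    refine ⟨fun ⟨q, h⟩ ⟨q', h'⟩ hq => ?_, fun x => ?_⟩
    · change h +ᵥ q.out = h' +ᵥ q'.out at hq
      obtain rfl : q = q' := by
        rw [← q.out_eq, ← q'.out_eq, Quotient.eq, orbitRel_apply]
        exact ⟨-h + h', by simp [add_vadd, ← hq]⟩
      rw [IsCancelVAdd.right_cancel h h' q.out hq]
    · obtain ⟨h, hx⟩ := orbitRel_apply.mp (Quotient.mk_out (s := orbitRel H X) x)
      exact ⟨(⟦x⟧, -h), by simp [← hx]⟩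

theorem orbitsProdEquiv_add [IsCancelVAdd H X] (q : orbitRel.Quotient H X) (h h' : H) :
    orbitsProdEquiv H X (q, h + h') = h +ᵥ orbitsProdEquiv H X (q, h') :=
  add_vadd h h' q.out

theorem orbitsProdEquiv_symm_vadd [IsCancelVAdd H X] (h : H) (x : X) :
    (orbitsProdEquiv H X).symm (h +ᵥ x) =
      (((orbitsProdEquiv H X).symm x).1, h + ((orbitsProdEquiv H X).symm x).2) := by
  rw [Equiv.symm_apply_eq, orbitsProdEquiv_add, Prod.mk.eta, Equiv.apply_symm_apply]

noncomputable def equivariantPermEquiv [IsCancelVAdd H X] :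
    {σ : Perm X // ∀ (h : H) x, σ (h +ᵥ x) = h +ᵥ σ x} ≃
      Perm (orbitRel.Quotient H X) × (orbitRel.Quotient H X → H) := by
  refine (subtypeEquiv (permCongr (orbitsProdEquiv H X).symm) fun σ => ?_).trans
    Perm.prodAddEquivariantEquiv
  simp only [permCongr_apply, symm_symm, orbitsProdEquiv_add, ← orbitsProdEquiv_symm_vadd,
    EmbeddingLike.apply_eq_iff_eq]
  refine ⟨fun hσ q h h' => hσ h _, fun hσ h x => ?_⟩
  obtain ⟨⟨q, h'⟩, rfl⟩ := (orbitsProdEquiv H X).surjective x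
  exact hσ q h h'

def invariantFunEquiv (β : Type*) :
    {c : X → β // ∀ (h : H) x, c (h +ᵥ x) = c x} ≃ (orbitRel.Quotient H X → β) where
  toFun c := Quotient.lift c.1 fun a b ⟨h, hab⟩ => by rw [← hab, c.2]
  invFun w := ⟨fun x => w ⟦x⟧, fun h x => congrArg w (Quotient.sound (mem_orbit x h))⟩
  left_inv c := rfl
  right_inv w := by ext ⟨q⟩; rfl

theorem natCard_eq_card_orbits_mul [IsCancelVAdd H X] :
    Nat.card X = Nat.card (orbitRel.Quotient H X) * Nat.card H := by
  rw [← Nat.card_prod, Nat.card_congr (orbitsProdEquiv H X)]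

theorem natCard_equivariantPerm [IsCancelVAdd H X] [Finite X] :
    Nat.card {σ : Perm X // ∀ (h : H) x, σ (h +ᵥ x) = h +ᵥ σ x} =
      (Nat.card (orbitRel.Quotient H X))! * Nat.card H ^ Nat.card (orbitRel.Quotient H X) := by
  rw [Nat.card_congr equivariantPermEquiv, Nat.card_prod, Nat.card_perm, Nat.card_fun]

theorem natCard_invariantFun [Finite X] (β : Type*) :
    Nat.card {c : X → β // ∀ (h : H) x, c (h +ᵥ x) = c x} =
      Nat.card β ^ Nat.card (orbitRel.Quotient H X) := by
  rw [Nat.card_congr (invariantFunEquiv β), Nat.card_fun]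

variable (H X) in
theorem natCard_range_orbit :
    Nat.card (Set.range (orbit H : X → Set X)) = Nat.card (orbitRel.Quotient H X) := by
  rw [show (orbit H : X → Set X) = orbitRel.Quotient.orbit ∘ Quotient.mk'' from rfl,
    Quotient.mk''_surjective.range_comp,
    Nat.card_range_of_injective orbitRel.Quotient.orbit_injective]

variable (H X) in
theorem sum_natCard_fixedBy [Fintype H] [Finite X] :
    ∑ h : H, Nat.card (fixedBy X h) = Nat.card (orbitRel.Quotient H X) * Nat.card H := by
  classical
  have := Fintype.ofFinite X
  simpa only [Nat.card_eq_fintype_card] using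
    sum_card_fixedBy_eq_card_orbits_mul_card_addGroup H X

end AddAction

section Translation
variable {G : Type*} [AddCommGroup G] (g : G)

theorem natCard_orbitRel_zmultiples [Finite G] :
    Nat.card (orbitRel.Quotient (AddSubgroup.zmultiples g) G) = Nat.card G / addOrderOf g := by
  rw [natCard_eq_card_orbits_mul (H := AddSubgroup.zmultiples g) (X := G), Nat.card_zmultiples,
    Nat.mul_div_cancel _ (addOrderOf_pos g)]

theorem forall_zmultiples_vadd_comm_iff (σ : G → G) :
    (∀ (h : AddSubgroup.zmultiples g) a, σ (h +ᵥ a) = h +ᵥ σ a) ↔ ∀ a, σ (a + g) = σ a + g := by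
  refine ⟨fun hσ a => ?_, fun hσ ⟨_, m, rfl⟩ a => ?_⟩
  · simpa [add_comm] using hσ ⟨g, AddSubgroup.mem_zmultiples g⟩ a
  · -- `σ` commutes with `· + g` iff `σ - id` is `g`-periodic, and periods form a subgroup.
    have hper : Periodic (fun a => σ a - a) g := fun a => by simp [hσ]
    have := hper.zsmul m a
    simp only [AddSubgroup.vadd_def, vadd_eq_add, add_comm (m • g)]
    simpa [sub_eq_sub_iff_add_eq_add, add_comm, add_left_comm] using this

theorem forall_zmultiples_vadd_invariant_iff {β : Type*} (c : G → β) :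
    (∀ (h : AddSubgroup.zmultiples g) a, c (h +ᵥ a) = c a) ↔ Periodic c g := by
  refine ⟨fun hc a => ?_, fun hc ⟨_, m, rfl⟩ a => ?_⟩
  · simpa [add_comm] using hc ⟨g, AddSubgroup.mem_zmultiples g⟩ a
  · simpa [AddSubgroup.vadd_def, add_comm] using hc.zsmul m a

theorem natCard_perm_add_right_comm [Finite G] :
    Nat.card {σ : Perm G // ∀ a, σ (a + g) = σ a + g} =
      (Nat.card G / addOrderOf g)! * addOrderOf g ^ (Nat.card G / addOrderOf g) := by
  have := natCard_equivariantPerm (H := AddSubgroup.zmultiples g) (X := G)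
  rw [natCard_orbitRel_zmultiples, Nat.card_zmultiples] at this
  rw [← this]
  exact Nat.card_congr (subtypeEquivRight fun σ => (forall_zmultiples_vadd_comm_iff g σ).symm)

theorem natCard_periodic [Finite G] (β : Type*) :
    Nat.card {c : G → β // Periodic c g} = Nat.card β ^ (Nat.card G / addOrderOf g) := by
  rw [← natCard_orbitRel_zmultiples, ← natCard_invariantFun]
  exact Nat.card_congr (subtypeEquivRight fun c => (forall_zmultiples_vadd_invariant_iff g c).symm)

end Translation

theorem IsAddCyclic.sum_apply_addOrderOf {G M : Type*} [AddGroup G] [IsAddCyclic G] [Fintype G]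
    [AddCommMonoid M] (F : ℕ → M) :
    ∑ g : G, F (addOrderOf g) = ∑ d ∈ (Fintype.card G).divisors, φ d • F d := by
  classical
  rw [← Finset.sum_fiberwise_of_maps_to (g := addOrderOf) (t := (Fintype.card G).divisors)
    fun g _ => Nat.mem_divisors.mpr ⟨addOrderOf_dvd_card, Fintype.card_ne_zero⟩]
  refine Finset.sum_congr rfl fun d hd => ?_
  rw [Finset.sum_congr rfl fun g hg => by rw [(Finset.mem_filter.mp hg).2], Finset.sum_const,
    IsAddCyclic.card_addOrderOf_eq_totient (Nat.mem_divisors.mp hd).1]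

namespace ZMod

variable {n : ℕ}

variable (n) in
def doubleHom : ZMod n →+ ZMod (2 * n) :=
  lift n ⟨(AddMonoidHom.mulLeft 2).comp (Int.castAddHom _), by
    change 2 * ((n : ℤ) : ZMod (2 * n)) = 0
    exact_mod_cast natCast_self (2 * n)⟩

theorem doubleHom_intCast (m : ℤ) : doubleHom n m = 2 * m := lift_coe _ _ _

theorem doubleHom_injective : Injective (doubleHom n) := by
  refine (injective_iff_map_eq_zero _).mpr fun a ha => ?_
  obtain ⟨m, rfl⟩ := intCast_surjective a
  rw [doubleHom_intCast, ← Int.cast_two, ← Int.cast_mul, intCast_zmod_eq_zero_iff_dvd] at ha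
  rw [intCast_zmod_eq_zero_iff_dvd]
  push_cast at ha
  exact (mul_dvd_mul_iff_left two_ne_zero).mp ha

theorem parity_doubleHom (a : ZMod n) : parity (doubleHom n a) = 0 := by
  obtain ⟨m, rfl⟩ := intCast_surjective a
  rw [doubleHom_intCast, map_mul, map_ofNat]
  exact zero_mul _

theorem parity_doubleHom_add_one (a : ZMod n) : parity (doubleHom n a + 1) = 1 := by
  rw [map_add, parity_doubleHom, map_one, zero_add]

theorem doubleHom_ne_doubleHom_add_one (a b : ZMod n) : doubleHom n a ≠ doubleHom n b + 1 := by
  intro h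
  have := congrArg parity h
  rw [parity_doubleHom, parity_doubleHom_add_one] at this
  exact zero_ne_one this

variable [NeZero n]

noncomputable def evenOddEquiv : ZMod n ⊕ ZMod n ≃ ZMod (2 * n) :=
  Equiv.ofBijective (Sum.elim (doubleHom n) (doubleHom n · + 1)) <| by
    rw [Fintype.bijective_iff_injective_and_card]
    refine ⟨doubleHom_injective.sumElim ((add_left_injective 1).comp doubleHom_injective)
      doubleHom_ne_doubleHom_add_one, by simp [two_mul]⟩

@[simp] theorem evenOddEquiv_inl (a : ZMod n) : evenOddEquiv (.inl a) = doubleHom n a := rfl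

@[simp] theorem evenOddEquiv_inr (a : ZMod n) : evenOddEquiv (.inr a) = doubleHom n a + 1 := rfl

@[simp] theorem evenOddEquiv_symm_doubleHom (a : ZMod n) :
    evenOddEquiv.symm (doubleHom n a) = .inl a :=
  evenOddEquiv.symm_apply_eq.mpr rfl

@[simp] theorem evenOddEquiv_symm_doubleHom_add_one (a : ZMod n) :
    evenOddEquiv.symm (doubleHom n a + 1) = .inr a :=
  evenOddEquiv.symm_apply_eq.mpr rfl

theorem forall_even_odd {P : ZMod (2 * n) → Prop} :
    (∀ x, P x) ↔ (∀ a, P (doubleHom n a)) ∧ ∀ a, P (doubleHom n a + 1) := by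
  simp [← evenOddEquiv.forall_congr_right, Sum.forall]

noncomputable def half (x : ZMod (2 * n)) : ZMod n := (evenOddEquiv.symm x).elim id id

@[simp] theorem half_doubleHom (a : ZMod n) : half (doubleHom n a) = a := by
  simp [half]

@[simp] theorem half_doubleHom_add_one (a : ZMod n) : half (doubleHom n a + 1) = a := by
  simp [half]

theorem doubleHom_half {x : ZMod (2 * n)} (hx : parity x = 0) : doubleHom n (half x) = x := by
  obtain ⟨a | a, rfl⟩ := evenOddEquiv.surjective x
  · rw [evenOddEquiv_inl, half_doubleHom]
  · rw [evenOddEquiv_inr, parity_doubleHom_add_one] at hx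
    exact absurd hx one_ne_zero

theorem doubleHom_half_add_one {x : ZMod (2 * n)} (hx : parity x = 1) :
    doubleHom n (half x) + 1 = x := by
  obtain ⟨a | a, rfl⟩ := evenOddEquiv.surjective x
  · rw [evenOddEquiv_inl, parity_doubleHom] at hx
    exact absurd hx zero_ne_one
  · rw [evenOddEquiv_inr, half_doubleHom_add_one]

end ZMod

namespace SgnColMatch

open ZMod

variable {n k : ℕ}

def pair (m : SgnColMatch n k) : ZMod (2 * n) → ZMod (2 * n) := m.1.1

def color (m : SgnColMatch n k) : ZMod (2 * n) → Fin k := m.1.2.1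

def sign (m : SgnColMatch n k) : ZMod 2 := m.1.2.2

theorem pair_pair (m : SgnColMatch n k) (x : ZMod (2 * n)) : m.pair (m.pair x) = x := m.2.1 x

theorem pair_ne (m : SgnColMatch n k) (x : ZMod (2 * n)) : m.pair x ≠ x := m.2.2.1 x

theorem color_pair (m : SgnColMatch n k) (x : ZMod (2 * n)) : m.color (m.pair x) = m.color x :=
  m.2.2.2.1 x

theorem parity_add_pair (m : SgnColMatch n k) (x : ZMod (2 * n)) : parity (x + m.pair x) = 1 :=
  m.2.2.2.2 x

@[ext] theorem ext {m m' : SgnColMatch n k} (hp : m.pair = m'.pair) (hc : m.color = m'.color)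
    (hs : m.sign = m'.sign) : m = m' :=
  Subtype.ext (Prod.ext hp (Prod.ext hc hs))

instance : VAdd (ZMod (2 * n)) (SgnColMatch n k) where
  vadd h m := ⟨(fun x => m.pair (x - h) + h, fun x => m.color (x - h), m.sign + parity h), by
    refine ⟨fun x => ?_, fun x hx => ?_, fun x => ?_, fun x => ?_⟩
    · simp only [add_sub_cancel_right, pair_pair, sub_add_cancel]
    · exact m.pair_ne (x - h) (eq_sub_of_add_eq hx)
    · simp only [add_sub_cancel_right, color_pair]
    · rw [show x + (m.pair (x - h) + h) = x - h + m.pair (x - h) + (h + h) by abel, map_add,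
        parity_add_pair, map_add, CharTwo.add_self_eq_zero, add_zero]⟩

@[simp] theorem vadd_pair (h : ZMod (2 * n)) (m : SgnColMatch n k) (x : ZMod (2 * n)) :
    (h +ᵥ m).pair x = m.pair (x - h) + h := rfl

@[simp] theorem vadd_color (h : ZMod (2 * n)) (m : SgnColMatch n k) (x : ZMod (2 * n)) :
    (h +ᵥ m).color x = m.color (x - h) := rfl

@[simp] theorem vadd_sign (h : ZMod (2 * n)) (m : SgnColMatch n k) :
    (h +ᵥ m).sign = m.sign + parity h := rfl

instance : AddAction (ZMod (2 * n)) (SgnColMatch n k) where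
  zero_vadd m := by ext <;> simp
  add_vadd g h m := by
    ext x
    · simp [sub_sub, add_comm h g, add_assoc]
    · simp [sub_sub]
    · simp only [vadd_sign, map_add]
      abel

theorem orbit_eq_setOf (m : SgnColMatch n k) :
    AddAction.orbit (ZMod (2 * n)) m = {m' : SgnColMatch n k | ∃ h : ZMod (2 * n),
        m'.val.1 = (fun x => m.val.1 (x - h) + h) ∧
        m'.val.2.1 = (fun x => m.val.2.1 (x - h)) ∧
        m'.val.2.2 = m.val.2.2 + ZMod.castHom (dvd_mul_right 2 n) (ZMod 2) h} := by
  ext m'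
  constructor
  · rintro ⟨h, rfl⟩
    exact ⟨h, rfl, rfl, rfl⟩
  · rintro ⟨h, hp, hc, hs⟩
    exact ⟨h, ext hp.symm hc.symm hs.symm⟩

theorem vadd_eq_self_iff (h : ZMod (2 * n)) (m : SgnColMatch n k) :
    h +ᵥ m = m ↔ (∀ x, m.pair (x + h) = m.pair x + h) ∧ (∀ x, m.color (x + h) = m.color x) ∧
      parity h = 0 := by
  simp only [SgnColMatch.ext_iff, funext_iff, vadd_pair, vadd_color, vadd_sign, add_eq_left]
  refine and_congr ⟨fun H x => ?_, fun H x => ?_⟩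
    (and_congr ⟨fun H x => ?_, fun H x => ?_⟩ Iff.rfl)
  · simpa using (H (x + h)).symm
  · simpa using (H (x - h)).symm
  · simpa using (H (x + h)).symm
  · simpa using (H (x - h)).symm

theorem parity_pair_doubleHom (m : SgnColMatch n k) (a : ZMod n) :
    parity (m.pair (doubleHom n a)) = 1 := by
  simpa only [map_add, parity_doubleHom, zero_add] using m.parity_add_pair (doubleHom n a)

theorem parity_pair_doubleHom_add_one (m : SgnColMatch n k) (a : ZMod n) :
    parity (m.pair (doubleHom n a + 1)) = 0 := by
  simpa only [map_add (parity) (doubleHom n a + 1), parity_doubleHom_add_one, add_eq_left]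
    using m.parity_add_pair (doubleHom n a + 1)

def evenColor (m : SgnColMatch n k) (a : ZMod n) : Fin k := m.color (doubleHom n a)

theorem color_doubleHom (m : SgnColMatch n k) (a : ZMod n) :
    m.color (doubleHom n a) = m.evenColor a := rfl

variable [NeZero n]

noncomputable def perm (m : SgnColMatch n k) : Perm (ZMod n) where
  toFun a := half (m.pair (doubleHom n a))
  invFun b := half (m.pair (doubleHom n b + 1))
  left_inv a := by
    simp only [doubleHom_half_add_one (m.parity_pair_doubleHom a), pair_pair, half_doubleHom]
  right_inv b := by
    simp only [doubleHom_half (m.parity_pair_doubleHom_add_one b), pair_pair,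
      half_doubleHom_add_one]

theorem pair_doubleHom (m : SgnColMatch n k) (a : ZMod n) :
    m.pair (doubleHom n a) = doubleHom n (m.perm a) + 1 :=
  (doubleHom_half_add_one (m.parity_pair_doubleHom a)).symm

theorem pair_doubleHom_add_one (m : SgnColMatch n k) (b : ZMod n) :
    m.pair (doubleHom n b + 1) = doubleHom n (m.perm.symm b) :=
  (doubleHom_half (m.parity_pair_doubleHom_add_one b)).symm

theorem color_doubleHom_add_one (m : SgnColMatch n k) (b : ZMod n) :
    m.color (doubleHom n b + 1) = m.evenColor (m.perm.symm b) := by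
  rw [evenColor, ← pair_doubleHom_add_one, color_pair]

noncomputable def ofPerm (σ : Perm (ZMod n)) (c : ZMod n → Fin k) (ε : ZMod 2) :
    SgnColMatch n k :=
  ⟨(fun x => (evenOddEquiv.symm x).elim (fun a => doubleHom n (σ a) + 1)
      (fun b => doubleHom n (σ.symm b)),
    fun x => (evenOddEquiv.symm x).elim c (c ∘ σ.symm), ε), by
    refine ⟨fun x => ?_, fun x => ?_, fun x => ?_, fun x => ?_⟩ <;>
      obtain ⟨a | a, rfl⟩ := evenOddEquiv.surjective x <;>
      simp [-castHom_apply, parity_doubleHom, parity_doubleHom_add_one,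
        doubleHom_ne_doubleHom_add_one, (doubleHom_ne_doubleHom_add_one _ _).symm]⟩

@[simp] theorem ofPerm_pair_doubleHom (σ : Perm (ZMod n)) (c : ZMod n → Fin k) (ε : ZMod 2)
    (a : ZMod n) : (ofPerm σ c ε).pair (doubleHom n a) = doubleHom n (σ a) + 1 := by
  simp [ofPerm, pair]

@[simp] theorem ofPerm_pair_doubleHom_add_one (σ : Perm (ZMod n)) (c : ZMod n → Fin k)
    (ε : ZMod 2) (b : ZMod n) :
    (ofPerm σ c ε).pair (doubleHom n b + 1) = doubleHom n (σ.symm b) := by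
  simp [ofPerm, pair]

@[simp] theorem ofPerm_color_doubleHom (σ : Perm (ZMod n)) (c : ZMod n → Fin k) (ε : ZMod 2)
    (a : ZMod n) : (ofPerm σ c ε).color (doubleHom n a) = c a := by
  simp [ofPerm, color]

@[simp] theorem ofPerm_color_doubleHom_add_one (σ : Perm (ZMod n)) (c : ZMod n → Fin k)
    (ε : ZMod 2) (b : ZMod n) : (ofPerm σ c ε).color (doubleHom n b + 1) = c (σ.symm b) := by
  simp [ofPerm, color]

noncomputable def equivPerm : SgnColMatch n k ≃ Perm (ZMod n) × (ZMod n → Fin k) × ZMod 2 where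
  toFun m := (m.perm, m.evenColor, m.sign)
  invFun p := ofPerm p.1 p.2.1 p.2.2
  left_inv m := by
    refine ext (funext fun x => ?_) (funext fun x => ?_) rfl
    · obtain ⟨a | a, rfl⟩ := evenOddEquiv.surjective x
      · exact (ofPerm_pair_doubleHom _ _ _ a).trans (m.pair_doubleHom a).symm
      · exact (ofPerm_pair_doubleHom_add_one _ _ _ a).trans (m.pair_doubleHom_add_one a).symm
    · obtain ⟨a | a, rfl⟩ := evenOddEquiv.surjective x
      · exact ofPerm_color_doubleHom _ _ _ a
      · exact (ofPerm_color_doubleHom_add_one _ _ _ a).trans (m.color_doubleHom_add_one a).symm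
  right_inv p := by
    ext a
    · simp [perm]
    · simp [evenColor]
    · rfl

theorem doubleHom_vadd_eq_self_iff (g : ZMod n) (m : SgnColMatch n k) :
    doubleHom n g +ᵥ m = m ↔ (∀ a, m.perm (a + g) = m.perm a + g) ∧ Periodic m.evenColor g := by
  have odd_add (b : ZMod n) : doubleHom n b + 1 + doubleHom n g = doubleHom n (b + g) + 1 := by
    rw [map_add, add_right_comm]
  simp only [vadd_eq_self_iff, forall_even_odd (P := fun x => _ = _), ← map_add, odd_add,
    pair_doubleHom, pair_doubleHom_add_one, color_doubleHom_add_one, color_doubleHom,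
    add_left_inj, doubleHom_injective.eq_iff, parity_doubleHom, and_true]
  have symm_add (H : ∀ a, m.perm (a + g) = m.perm a + g) (b : ZMod n) :
      m.perm.symm (b + g) = m.perm.symm b + g :=
    m.perm.symm_apply_eq.mpr (by rw [H, apply_symm_apply])
  exact ⟨fun ⟨⟨H, _⟩, Hc, _⟩ => ⟨H, Hc⟩,
    fun ⟨H, Hc⟩ => ⟨⟨H, symm_add H⟩, Hc, fun b => by rw [symm_add H, Hc]⟩⟩

omit [NeZero n] in
theorem natCard_fixedBy_doubleHom_add_one (g : ZMod n) :
    Nat.card (fixedBy (SgnColMatch n k) (doubleHom n g + 1)) = 0 := by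
  have : IsEmpty (fixedBy (SgnColMatch n k) (doubleHom n g + 1)) := ⟨fun ⟨m, hm⟩ =>
    one_ne_zero ((parity_doubleHom_add_one g).symm.trans ((vadd_eq_self_iff _ m).mp hm).2.2)⟩
  exact Nat.card_of_isEmpty

instance : Finite (SgnColMatch n k) := Subtype.finite

theorem natCard_fixedBy_doubleHom (g : ZMod n) :
    Nat.card (fixedBy (SgnColMatch n k) (doubleHom n g)) =
      2 * ((n / addOrderOf g)! * addOrderOf g ^ (n / addOrderOf g) * k ^ (n / addOrderOf g)) := by
  have e : fixedBy (SgnColMatch n k) (doubleHom n g) ≃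
      {σ : Perm (ZMod n) // ∀ a, σ (a + g) = σ a + g} × {c : ZMod n → Fin k // Periodic c g} ×
        ZMod 2 :=
    (equivPerm.subtypeEquiv fun m => doubleHom_vadd_eq_self_iff g m).trans <|
      subtypeProdEquivProd.trans (prodCongr (Equiv.refl _) prodSubtypeFstEquivSubtypeProd)
  rw [Nat.card_congr e, Nat.card_prod, Nat.card_prod, natCard_perm_add_right_comm,
    natCard_periodic, Nat.card_zmod, Nat.card_zmod, Nat.card_eq_fintype_card, Fintype.card_fin]
  ring

theorem sum_natCard_fixedBy :
    ∑ h : ZMod (2 * n), Nat.card (fixedBy (SgnColMatch n k) h) =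
      2 * ∑ d ∈ n.divisors, φ d * (n / d)! * d ^ (n / d) * k ^ (n / d) := by
  rw [← evenOddEquiv.sum_comp, Fintype.sum_sum_type]
  simp only [evenOddEquiv_inl, evenOddEquiv_inr, natCard_fixedBy_doubleHom,
    natCard_fixedBy_doubleHom_add_one, Finset.sum_const_zero, add_zero, ← Finset.mul_sum]
  rw [IsAddCyclic.sum_apply_addOrderOf (fun d => (n / d)! * d ^ (n / d) * k ^ (n / d)), ZMod.card]
  simp only [smul_eq_mul, mul_assoc]

end SgnColMatch

theorem stmt_19_general (n k : ℕ) (hn : 1 ≤ n) (N : ℕ)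
    (hN : N = Nat.card {s : Set (SgnColMatch n k) //
      ∃ m : SgnColMatch n k, s = {m' : SgnColMatch n k | ∃ h : ZMod (2 * n),
        m'.val.1 = (fun x => m.val.1 (x - h) + h) ∧
        m'.val.2.1 = (fun x => m.val.2.1 (x - h)) ∧
        m'.val.2.2 = m.val.2.2 + ZMod.castHom (dvd_mul_right 2 n) (ZMod 2) h}}) :
    n * N = ∑ d ∈ n.divisors,
      d.totient * (n / d).factorial * d ^ (n / d) * k ^ (n / d) := by
  have : NeZero n := ⟨by omega⟩
  simp only [← SgnColMatch.orbit_eq_setOf] at hN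
  replace hN : N = Nat.card (orbitRel.Quotient (ZMod (2 * n)) (SgnColMatch n k)) := by
    rw [hN, ← natCard_range_orbit]
    exact Nat.card_congr (subtypeEquivRight fun s => by simp [eq_comm])
  have burnside := sum_natCard_fixedBy (ZMod (2 * n)) (SgnColMatch n k)
  rw [SgnColMatch.sum_natCard_fixedBy, ← hN, Nat.card_zmod] at burnside
  linarith

/-- Let `n, k ≥ 1`.  Consider the triples `(f, c, ε)` where `(f, c)` is a `k`-colored
perfect matching on `ℤ/2nℤ` with `x + f(x)` odd for every `x`, and `ε ∈ ℤ/2ℤ`, with the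
action of `ℤ/2nℤ` given by `h·(f, c, ε) = (x ↦ f(x-h)+h, x ↦ c(x-h), ε + h̄)`.
The number `N` of orbits satisfies `n·N = Σ_{d ∣ n} φ(d)·(n/d)!·d^{n/d}·k^{n/d}`. -/
theorem stmt_19 (n k : ℕ) (hn : 1 ≤ n) (hk : 1 ≤ k) (N : ℕ)
    (hN : N = Nat.card {s : Set (SgnColMatch n k) //
      ∃ m : SgnColMatch n k, s = {m' : SgnColMatch n k | ∃ h : ZMod (2 * n),
        m'.val.1 = (fun x => m.val.1 (x - h) + h) ∧
        m'.val.2.1 = (fun x => m.val.2.1 (x - h)) ∧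
        m'.val.2.2 = m.val.2.2 + ZMod.castHom (dvd_mul_right 2 n) (ZMod 2) h}}) :
    n * N = ∑ d ∈ n.divisors,
      d.totient * (n / d).factorial * d ^ (n / d) * k ^ (n / d) :=
  stmt_19_general n k hn N hN
end
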